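/- arXiv:2009.12937 — 9 statements merged into one kernel-verified Lean document; each statement's English description precedes it below -/
import Mathlib

section
/- Let d ≥ 1, p ∈ (1/2, 1) and q = 1 − p. Let P be the d×d matrix with P_{i,i+1} = p for 1 ≤ i ≤ d−1, P_{i,i−1} = q for 2 ≤ i ≤ d, and all other entries 0, and set R = I − Pᵀ. Then R is invertible and its inverse is given explicitly by: for 1 ≤ i ≤ j ≤ d, (R⁻¹)_{ij} = ((q/p)^{j−i}/(p−q)) · (1 − (q/p)^i)(1 − (q/p)^{d+1−j}) / (1 − (q/p)^{d+1}); and for 1 ≤ j < i ≤ d, (R⁻¹)_{ij} = ((p/q)^{i−j}/(p−q)) · ((p/q)^j − 1)((p/q)^{d+1−i} − 1) / ((p/q)^{d+1} − 1). -/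
/-!
Column `j` of `R⁻¹` solves `g(i) - p g(i-1) - q g(i+1) = δᵢⱼ` with `g(-1) = g(d) = 0`: it is the
Green function of a biased walk killed at the two ends. Away from the diagonal the solutions of
this recurrence are spanned by `1` and `(p/q)^i`, and the unique combination vanishing at both
ends with the right jump at `i = j` is the stated formula.
-/

open Matrix Finset

def tridiag {α : Type*} [Zero α] (d : ℕ) (p q : α) : Matrix (Fin d) (Fin d) α :=
  Matrix.of fun i j => if (j : ℕ) = i + 1 then p else if (i : ℕ) = j + 1 then q else 0

theorem tridiag_transpose_mulVec_apply {α : Type*} [Semiring α] {d : ℕ} (p q : α) (f : ℕ → α)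
    (h0 : f 0 = 0) (hd : f (d + 1) = 0) (i : Fin d) :
    ((tridiag d p q)ᵀ *ᵥ fun k => f (k + 1)) i = p * f i + q * f (i + 2) := by
  have hsplit : ∀ k : Fin d, (tridiag d p q)ᵀ i k * f (k + 1) =
      (if (k : ℕ) + 1 = i then p * f i else 0) +
        (if (k : ℕ) = i + 1 then q * f (i + 2) else 0) := by
    intro k
    simp only [transpose_apply, tridiag, of_apply]
    split_ifs <;> first | omega | simp_all
  rw [mulVec, dotProduct, Finset.sum_congr rfl fun k _ => hsplit k, sum_add_distrib,
    Fin.sum_univ_eq_sum_range (fun k => if k + 1 = (i : ℕ) then p * f i else 0),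
    Fin.sum_univ_eq_sum_range (fun k => if k = (i : ℕ) + 1 then q * f (i + 2) else 0),
    sum_ite_eq']
  obtain ⟨i, hi⟩ := i
  congr 1
  · cases i with
    | zero => simp [h0]
    | succ i => simp [show i < d by omega]
  · rcases (show i + 1 < d ∨ i + 1 = d by omega) with h | rfl
    · simp [h]
    · simp [hd]

/-- With `r = q / p`, `walkGreen r N m n` is `(p - q) (1 - r ^ N)` times the expected number of
visits to `n` of the walk started at `m` that steps up with probability `p` and down with
probability `q`, killed on reaching `0` or `N`. -/
def walkGreen {K : Type*} [CommRing K] (r : K) (N m n : ℕ) : K :=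
  if n ≤ m then r ^ (m - n) * ((1 - r ^ n) * (1 - r ^ (N - m)))
  else (1 - r ^ m) * (1 - r ^ (N - n))

section walkGreen

variable {K : Type*} [CommRing K] (r : K) {N m n : ℕ}

theorem walkGreen_of_le (h : n ≤ m) :
    walkGreen r N m n = r ^ (m - n) * ((1 - r ^ n) * (1 - r ^ (N - m))) :=
  if_pos h

theorem walkGreen_of_ge (h : m ≤ n) : walkGreen r N m n = (1 - r ^ m) * (1 - r ^ (N - n)) := by
  rcases h.lt_or_eq with h | rfl
  · exact if_neg (by omega)
  · simp [walkGreen]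

theorem walkGreen_zero : walkGreen r N m 0 = 0 := by
  simp [walkGreen_of_le r (Nat.zero_le m)]

theorem walkGreen_self (hm : m ≤ N) : walkGreen r N m N = 0 := by
  simp [walkGreen_of_ge r hm]

theorem walkGreen_recurrence {p q : K} (hq : q = p * r) (hpq : p + q = 1) (hn : n + 2 ≤ N) :
    walkGreen r N m (n + 1) - p * walkGreen r N m n - q * walkGreen r N m (n + 2) =
      if n + 1 = m then (p - q) * (1 - r ^ N) else 0 := by
  subst hq
  obtain ⟨l, rfl⟩ : ∃ l, N = n + 2 + l := ⟨N - (n + 2), by omega⟩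
  rcases lt_trichotomy (n + 1) m with h | rfl | h
  · obtain ⟨k, rfl⟩ : ∃ k, m = n + 2 + k := ⟨m - (n + 2), by omega⟩
    rw [walkGreen_of_le r h.le, walkGreen_of_le r (by omega), walkGreen_of_le r (by omega),
      if_neg h.ne, show n + 2 + k - (n + 1) = k + 1 by omega, show n + 2 + k - n = k + 2 by omega,
      show n + 2 + k - (n + 2) = k by omega]
    linear_combination r ^ k * (1 - r ^ (n + 2 + l - (n + 2 + k))) * (r ^ (n + 2) - r) * hpq
  · rw [walkGreen_of_ge r le_rfl, walkGreen_of_le r (by omega), walkGreen_of_ge r (by omega),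
      if_pos rfl, show n + 1 - n = 1 by omega, show n + 2 + l - (n + 1) = l + 1 by omega,
      show n + 2 + l - (n + 2) = l by omega]
    linear_combination -(1 - r ^ (n + 1)) * (1 - r ^ (l + 1)) * hpq
  · rw [walkGreen_of_ge r h.le, walkGreen_of_ge r (by omega), walkGreen_of_ge r (by omega),
      if_neg h.ne', show n + 2 + l - (n + 1) = l + 1 by omega,
      show n + 2 + l - n = l + 2 by omega, show n + 2 + l - (n + 2) = l by omega]
    linear_combination -(1 - r ^ m) * (1 - r ^ (l + 1)) * hpq

end walkGreen

section atlasInv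

variable {K : Type*} [Field K] {d : ℕ} {p q : K}

/-- Row `i`, column `j` is the Green function at `i + 1` from `j + 1`: the shift makes the
boundary points `0` and `d + 1` available as indices in `ℕ`. -/
def atlasInv (d : ℕ) (p q : K) : Matrix (Fin d) (Fin d) K :=
  Matrix.of fun i j =>
    walkGreen (q / p) (d + 1) (j + 1) (i + 1) / ((p - q) * (1 - (q / p) ^ (d + 1)))

theorem one_sub_tridiag_transpose_mul_atlasInv (hp : p ≠ 0) (hpq : p + q = 1)
    (hC : (p - q) * (1 - (q / p) ^ (d + 1)) ≠ 0) :
    (1 - (tridiag d p q)ᵀ) * atlasInv d p q = 1 := by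
  ext i j
  set C := (p - q) * (1 - (q / p) ^ (d + 1))
  set g := walkGreen (q / p) (d + 1) ((j : ℕ) + 1)
  have hcol : ((tridiag d p q)ᵀ * atlasInv d p q) i j = p * (g i / C) + q * (g (i + 2) / C) :=
    tridiag_transpose_mulVec_apply p q (fun n => g n / C) (by simp [g, walkGreen_zero])
      (by simp [g, walkGreen_self _ (by omega : (j : ℕ) + 1 ≤ d + 1)]) i
  have hrec : g (i + 1) - p * g i - q * g (i + 2) = if (i : ℕ) + 1 = j + 1 then C else 0 :=
    walkGreen_recurrence (q / p) (by field_simp) hpq (by omega)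
  rw [sub_mul, one_mul, Matrix.sub_apply, hcol, atlasInv, of_apply, one_apply]
  calc g (i + 1) / C - (p * (g i / C) + q * (g (i + 2) / C))
      = (g (i + 1) - p * g i - q * g (i + 2)) / C := by ring
    _ = if i = j then 1 else 0 := by
      rw [hrec]
      split_ifs <;> simp_all [Fin.ext_iff]

theorem atlasInv_apply_of_le {i j : Fin d} (h : (i : ℕ) ≤ j) :
    atlasInv d p q i j = ((q / p) ^ ((j : ℕ) - i) / (p - q)) *
      ((1 - (q / p) ^ ((i : ℕ) + 1)) * (1 - (q / p) ^ (d - j))) / (1 - (q / p) ^ (d + 1)) := by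
  rw [atlasInv, of_apply, walkGreen_of_le _ (by omega), Nat.add_sub_add_right,
    Nat.add_sub_add_right, div_mul_eq_mul_div, div_div]

theorem pow_mul_sub_one_mul_sub_one_div {r s : K} (hrs : r * s = 1) (a b c : ℕ) :
    s ^ a * ((s ^ b - 1) * (s ^ c - 1)) / (s ^ (a + b + c) - 1) =
      (1 - r ^ b) * (1 - r ^ c) / (1 - r ^ (a + b + c)) := by
  have hs : s ≠ 0 := right_ne_zero_of_mul_eq_one hrs
  obtain rfl : r = s⁻¹ := eq_inv_of_mul_eq_one_left hrs
  by_cases h : s ^ (a + b + c) = 1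
  · simp [h, inv_pow]
  · have h' : s ^ (a + b + c) - 1 ≠ 0 := sub_ne_zero.2 h
    have key : ∀ n, 1 - s⁻¹ ^ n = (s ^ n - 1) / s ^ n := fun n => by
      rw [inv_pow]; field_simp
    rw [key, key, key, pow_add, pow_add]
    rw [pow_add, pow_add] at h'
    field_simp

theorem atlasInv_apply_of_lt (hp : p ≠ 0) (hq : q ≠ 0) {i j : Fin d} (h : (j : ℕ) < i) :
    atlasInv d p q i j = ((p / q) ^ ((i : ℕ) - j) / (p - q)) *
      (((p / q) ^ ((j : ℕ) + 1) - 1) * ((p / q) ^ (d - i) - 1)) / ((p / q) ^ (d + 1) - 1) := by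
  have key := pow_mul_sub_one_mul_sub_one_div (by field_simp : q / p * (p / q) = 1)
    ((i : ℕ) - j) ((j : ℕ) + 1) (d - i)
  rw [show (i : ℕ) - j + (j + 1) + (d - i) = d + 1 by omega] at key
  rw [atlasInv, of_apply, walkGreen_of_ge _ (by omega), Nat.add_sub_add_right, div_mul_eq_mul_div,
    div_div, mul_comm (p - q) ((p / q) ^ (d + 1) - 1), ← div_div _ _ (p - q), key, div_div,
    mul_comm (p - q)]

end atlasInv

/-- Indices of `Fin d` are 0-based: the paper's 1-based index `i` corresponds to `(i : ℕ) + 1`. -/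
theorem stmt1_general (d : ℕ) (p : ℝ) (hp : 1/2 < p) (hp1 : p < 1)
    (q : ℝ) (hq : q = 1 - p)
    (P : Matrix (Fin d) (Fin d) ℝ)
    (hP : ∀ i j : Fin d, P i j =
      if (j : ℕ) = (i : ℕ) + 1 then p else if (i : ℕ) = (j : ℕ) + 1 then q else 0)
    (R : Matrix (Fin d) (Fin d) ℝ) (hR : R = 1 - Pᵀ) :
    IsUnit R ∧
    (∀ i j : Fin d, (i : ℕ) ≤ (j : ℕ) →
      R⁻¹ i j = ((q/p) ^ ((j : ℕ) - (i : ℕ)) / (p - q)) *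
        ((1 - (q/p) ^ ((i : ℕ) + 1)) * (1 - (q/p) ^ (d - (j : ℕ)))) /
        (1 - (q/p) ^ (d + 1))) ∧
    (∀ i j : Fin d, (j : ℕ) < (i : ℕ) →
      R⁻¹ i j = ((p/q) ^ ((i : ℕ) - (j : ℕ)) / (p - q)) *
        (((p/q) ^ ((j : ℕ) + 1) - 1) * ((p/q) ^ (d - (i : ℕ)) - 1)) /
        ((p/q) ^ (d + 1) - 1)) := by
  have hp0 : p ≠ 0 := by positivity
  have hq0 : 0 < q := by linarith
  have hr : q / p < 1 := (div_lt_one (by positivity)).2 (by linarith)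
  have hC : (p - q) * (1 - (q / p) ^ (d + 1)) ≠ 0 :=
    mul_ne_zero (by linarith) (sub_ne_zero.2 (pow_lt_one₀ (by positivity) hr d.succ_ne_zero).ne')
  have hPt : P = tridiag d p q := by ext i j; exact hP i j
  have hRB : R * atlasInv d p q = 1 := by
    rw [hR, hPt]
    exact one_sub_tridiag_transpose_mul_atlasInv hp0 (by linarith) hC
  rw [inv_eq_right_inv hRB]
  exact ⟨.of_mul_eq_one _ hRB, fun i j => atlasInv_apply_of_le,
    fun i j => atlasInv_apply_of_lt hp0 hq0.ne'⟩

/-- Explicit inverse of the asymmetric Atlas reflection matrix `R = I - Pᵀ`.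
Indices of `Fin d` are 0-based, so the paper's 1-based index `i` corresponds to `(i : ℕ) + 1`. -/
theorem stmt1 (d : ℕ) (hd : 1 ≤ d) (p : ℝ) (hp : 1/2 < p) (hp1 : p < 1)
    (q : ℝ) (hq : q = 1 - p)
    (P : Matrix (Fin d) (Fin d) ℝ)
    (hP : ∀ i j : Fin d, P i j =
      if (j : ℕ) = (i : ℕ) + 1 then p else if (i : ℕ) = (j : ℕ) + 1 then q else 0)
    (R : Matrix (Fin d) (Fin d) ℝ) (hR : R = 1 - Pᵀ) :
    IsUnit R ∧
    (∀ i j : Fin d, (i : ℕ) ≤ (j : ℕ) →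
      R⁻¹ i j = ((q/p) ^ ((j : ℕ) - (i : ℕ)) / (p - q)) *
        ((1 - (q/p) ^ ((i : ℕ) + 1)) * (1 - (q/p) ^ (d - (j : ℕ)))) /
        (1 - (q/p) ^ (d + 1))) ∧
    (∀ i j : Fin d, (j : ℕ) < (i : ℕ) →
      R⁻¹ i j = ((p/q) ^ ((i : ℕ) - (j : ℕ)) / (p - q)) *
        (((p/q) ^ ((j : ℕ) + 1) - 1) * ((p/q) ^ (d - (i : ℕ)) - 1)) /
        ((p/q) ^ (d + 1) - 1)) :=
  stmt1_general d p hp hp1 q hq P hP R hR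
end

section
/- Let d ≥ 1, p ∈ (1/2, 1) and q = 1 − p. Let P be the d×d matrix with P_{i,i+1} = p for 1 ≤ i ≤ d−1, P_{i,i−1} = q for 2 ≤ i ≤ d, and all other entries 0, and set R = I − Pᵀ. Then R is invertible and the entries of R⁻¹ satisfy: (R⁻¹)_{ij} ≤ (q/p)^{j−i}/(p−q) for all 1 ≤ i ≤ j ≤ d, and (R⁻¹)_{ij} ≤ 1/(p−q) for all 1 ≤ j < i ≤ d. -/
/-!
Column `b` of `R⁻¹` solves `g(a) - p g(a-1) - q g(a+1) = δ_{ab}` on `{1, …, d}` with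
`g(0) = g(d+1) = 0`: it is the Green function of the random walk killed at `0` and `d + 1`.
With `ρ = p / q > 1` the harmonic functions are spanned by `1` and `ρ^a`, so the Green function is
`(ρ^min(a,b) - 1)(ρ^(d+1) - ρ^max(a,b)) / ((p - q) ρ^b (ρ^(d+1) - 1))`: a product of the harmonic
functions vanishing at `0` and at `d + 1`, normalised by the jump of the equation at `a = b`.
Bounding `ρ^min - 1 ≤ ρ^min` and `ρ^(d+1) - ρ^max ≤ ρ^(d+1) - 1` leaves
`ρ^(min(a,b) - b) / (p - q)`, which is the claim.
-/

open Matrix Finset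

def atlasTransition (d : ℕ) (p q : ℝ) : Matrix (Fin d) (Fin d) ℝ :=
  Matrix.of fun i j => if (j : ℕ) = i + 1 then p else if (i : ℕ) = j + 1 then q else 0

lemma Fin.sum_ite_val_succ_eq {M : Type*} [AddCommMonoid M] (d a : ℕ) (x : M) :
    ∑ k : Fin d, (if (k : ℕ) + 1 = a then x else 0) = if 1 ≤ a ∧ a ≤ d then x else 0 := by
  split_ifs with ha
  · rw [Fintype.sum_eq_single ⟨a - 1, by omega⟩
      fun k hk => if_neg fun h => hk (Fin.ext (by simp; omega))]
    simp only [if_pos (show a - 1 + 1 = a by omega)]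
  · exact Fintype.sum_eq_zero _ fun k => if_neg (by omega)

lemma sum_atlasTransition_mul {d : ℕ} (p q : ℝ) (f : ℕ → ℝ) (h0 : f 0 = 0) (hd : f (d + 1) = 0)
    (i : Fin d) :
    ∑ k : Fin d, atlasTransition d p q k i * f (k + 1) = p * f i + q * f (i + 2) := by
  have hsplit (k : Fin d) : atlasTransition d p q k i * f (k + 1) =
      (if (k : ℕ) + 1 = i then p * f i else 0) +
        (if (k : ℕ) + 1 = i + 2 then q * f (i + 2) else 0) := by
    simp only [atlasTransition, of_apply]
    split_ifs <;> first | omega | simp_all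
  have hlow : (if 1 ≤ (i : ℕ) ∧ (i : ℕ) ≤ d then p * f i else 0) = p * f i := by
    split_ifs with h
    · rfl
    · rw [show (i : ℕ) = 0 by omega, h0, mul_zero]
  have hup : (if 1 ≤ (i : ℕ) + 2 ∧ (i : ℕ) + 2 ≤ d then q * f (i + 2) else 0) = q * f (i + 2) := by
    split_ifs with h
    · rfl
    · rw [show (i : ℕ) + 2 = d + 1 by omega, hd, mul_zero]
  rw [Fintype.sum_congr _ _ hsplit, sum_add_distrib, Fin.sum_ite_val_succ_eq,
    Fin.sum_ite_val_succ_eq, hlow, hup]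

/-- For `ρ = p / q`, `(p - q) ρ^b (ρ^(d+1) - 1)` times the Green function of the walk on
`{0, …, d + 1}` stepping down with probability `p` and up with probability `q`, killed at `0` and
`d + 1`. -/
noncomputable def ruinGreen (ρ : ℝ) (d a b : ℕ) : ℝ :=
  (ρ ^ min a b - 1) * (ρ ^ (d + 1) - ρ ^ max a b)

lemma ruinGreen_zero_left (ρ : ℝ) (d b : ℕ) : ruinGreen ρ d 0 b = 0 := by
  simp [ruinGreen]

lemma ruinGreen_top_left (ρ : ℝ) {d b : ℕ} (hb : b ≤ d + 1) : ruinGreen ρ d (d + 1) b = 0 := by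
  simp [ruinGreen, max_eq_left hb]

lemma ruinGreen_of_le (ρ : ℝ) {d a b : ℕ} (h : a ≤ b) :
    ruinGreen ρ d a b = (ρ ^ a - 1) * (ρ ^ (d + 1) - ρ ^ b) := by
  rw [ruinGreen, min_eq_left h, max_eq_right h]

lemma ruinGreen_of_ge (ρ : ℝ) {d a b : ℕ} (h : b ≤ a) :
    ruinGreen ρ d a b = (ρ ^ b - 1) * (ρ ^ (d + 1) - ρ ^ a) := by
  rw [ruinGreen, min_eq_right h, max_eq_left h]

lemma ruinGreen_le {ρ : ℝ} (hρ : 1 ≤ ρ) {d a b : ℕ} (hmax : max a b ≤ d + 1) :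
    ruinGreen ρ d a b ≤ ρ ^ min a b * (ρ ^ (d + 1) - 1) := by
  have hone : 1 ≤ ρ ^ max a b := one_le_pow₀ hρ
  apply mul_le_mul (by linarith) (by linarith) (sub_nonneg.mpr (pow_le_pow_right₀ hρ hmax))
  positivity

section Harmonic

variable {p q ρ : ℝ} (hpq : p + q = 1) (hρ : q * ρ = p)
include hpq hρ

lemma affine_pow_harmonic (α β : ℝ) (a : ℕ) :
    p * (α + β * ρ ^ a) + q * (α + β * ρ ^ (a + 2)) = α + β * ρ ^ (a + 1) := by
  linear_combination (α + β * ρ ^ a * ρ) * hpq + β * ρ ^ a * (ρ - 1) * hρ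

lemma ruinGreen_harmonic (d a b : ℕ) :
    ruinGreen ρ d (a + 1) b - p * ruinGreen ρ d a b - q * ruinGreen ρ d (a + 2) b =
      if a + 1 = b then (p - q) * ρ ^ b * (ρ ^ (d + 1) - 1) else 0 := by
  rcases lt_trichotomy (a + 1) b with hab | rfl | hab
  · rw [if_neg hab.ne]
    rw [ruinGreen_of_le ρ hab.le, ruinGreen_of_le ρ (show a ≤ b by omega),
      ruinGreen_of_le ρ (show a + 2 ≤ b by omega)]
    linear_combination -affine_pow_harmonic hpq hρ (-(ρ ^ (d + 1) - ρ ^ b)) (ρ ^ (d + 1) - ρ ^ b) a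
  · rw [if_pos rfl, ruinGreen_of_le ρ le_rfl, ruinGreen_of_le ρ (show a ≤ a + 1 by omega),
      ruinGreen_of_ge ρ (show a + 1 ≤ a + 2 by omega)]
    -- the left side is `q` times the discrete Wronskian of `ρ^a - 1` and `ρ^(d+1) - ρ^a`
    linear_combination
      (ρ ^ (a + 1) * (ρ ^ (d + 1) - 1) - ρ ^ a * (ρ - 1) * (ρ ^ (d + 1) - ρ ^ (a + 1))) * hρ
        + (1 - ρ ^ (a + 1)) * (ρ ^ (d + 1) - ρ ^ (a + 1)) * hpq
  · rw [if_neg hab.ne']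
    rw [ruinGreen_of_ge ρ hab.le, ruinGreen_of_ge ρ (show b ≤ a by omega),
      ruinGreen_of_ge ρ (show b ≤ a + 2 by omega)]
    linear_combination -affine_pow_harmonic hpq hρ ((ρ ^ b - 1) * ρ ^ (d + 1)) (-(ρ ^ b - 1)) a

end Harmonic

noncomputable def atlasGreen (d : ℕ) (p q : ℝ) : Matrix (Fin d) (Fin d) ℝ :=
  Matrix.of fun i j =>
    ruinGreen (p / q) d (i + 1) (j + 1) /
      ((p - q) * (p / q) ^ ((j : ℕ) + 1) * ((p / q) ^ (d + 1) - 1))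

section AtlasGreen

variable {p q : ℝ} (hq : 0 < q) (hqp : q < p)
include hq hqp

lemma one_sub_transpose_mul_atlasGreen (hpq : p + q = 1) (d : ℕ) :
    (1 - (atlasTransition d p q)ᵀ) * atlasGreen d p q = 1 := by
  have hρ : 1 < p / q := (one_lt_div hq).mpr hqp
  ext i j
  set c := (p - q) * (p / q) ^ ((j : ℕ) + 1) * ((p / q) ^ (d + 1) - 1) with hc
  have hc0 : c ≠ 0 := by
    have : 1 < (p / q) ^ (d + 1) := one_lt_pow₀ hρ (by omega)
    have : 0 < p - q := by linarith
    positivity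
  have hcol := sum_atlasTransition_mul p q (fun a => ruinGreen (p / q) d a (j + 1) / c)
    (by simp [ruinGreen_zero_left])
    (by simp [ruinGreen_top_left _ (show (j : ℕ) + 1 ≤ d + 1 by omega)]) i
  have hharm := ruinGreen_harmonic hpq (mul_div_cancel₀ p hq.ne') d i (j + 1)
  rw [sub_mul, one_mul, Matrix.sub_apply, mul_apply]
  simp only [transpose_apply, atlasGreen, of_apply] at hcol ⊢
  rw [hcol, one_apply]
  calc _ = (ruinGreen (p / q) d (i + 1) (j + 1) - p * ruinGreen (p / q) d i (j + 1)
        - q * ruinGreen (p / q) d (i + 2) (j + 1)) / c := by ring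
    _ = _ := by
      rw [hharm, ← hc]
      by_cases hij : i = j
      · simp [hij, hc0]
      · simp [hij, Fin.val_inj]

lemma atlasGreen_le {d : ℕ} (i j : Fin d) :
    atlasGreen d p q i j ≤
      (p / q) ^ min ((i : ℕ) + 1) ((j : ℕ) + 1) / (p / q) ^ ((j : ℕ) + 1) / (p - q) := by
  have hρ : 1 < p / q := (one_lt_div hq).mpr hqp
  have hD : 0 < (p / q) ^ (d + 1) - 1 := sub_pos.mpr (one_lt_pow₀ hρ (by omega))
  have hpq : 0 < p - q := by linarith
  calc atlasGreen d p q i j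
      ≤ (p / q) ^ min ((i : ℕ) + 1) ((j : ℕ) + 1) * ((p / q) ^ (d + 1) - 1)
        / ((p - q) * (p / q) ^ ((j : ℕ) + 1) * ((p / q) ^ (d + 1) - 1)) :=
        div_le_div_of_nonneg_right (ruinGreen_le hρ.le (by omega)) (by positivity)
    _ = _ := by field_simp

lemma atlasGreen_le_of_le {d : ℕ} {i j : Fin d} (hij : (i : ℕ) ≤ j) :
    atlasGreen d p q i j ≤ (q / p) ^ ((j : ℕ) - i) / (p - q) := by
  have hpow : (p / q) ^ ((i : ℕ) + 1) / (p / q) ^ ((j : ℕ) + 1) = (q / p) ^ ((j : ℕ) - i) := by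
    rw [show (j : ℕ) - i = (j + 1) - (i + 1) by omega,
      pow_sub₀ _ (div_pos hq (hq.trans hqp)).ne' (by omega),
      div_pow, div_pow, div_pow, div_pow]
    field_simp
  have := atlasGreen_le hq hqp i j
  rwa [min_eq_left (by omega), hpow] at this

lemma atlasGreen_le_of_lt {d : ℕ} {i j : Fin d} (hji : (j : ℕ) < i) :
    atlasGreen d p q i j ≤ 1 / (p - q) := by
  have hρ : (p / q) ^ ((j : ℕ) + 1) ≠ 0 := pow_ne_zero _ (div_pos (hq.trans hqp) hq).ne'
  have := atlasGreen_le hq hqp i j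
  rwa [min_eq_right (by omega), div_self hρ] at this

end AtlasGreen

/-- Indices of `Fin d` are 0-based: the paper's 1-based index `i` is `(i : ℕ) + 1`. -/
theorem stmt2_general (d : ℕ) (p : ℝ) (hp : 1/2 < p) (hp1 : p < 1)
    (q : ℝ) (hq : q = 1 - p)
    (P : Matrix (Fin d) (Fin d) ℝ)
    (hP : ∀ i j : Fin d, P i j =
      if (j : ℕ) = (i : ℕ) + 1 then p else if (i : ℕ) = (j : ℕ) + 1 then q else 0)
    (R : Matrix (Fin d) (Fin d) ℝ) (hR : R = 1 - Pᵀ) :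
    IsUnit R ∧
    (∀ i j : Fin d, (i : ℕ) ≤ (j : ℕ) →
      R⁻¹ i j ≤ (q/p) ^ ((j : ℕ) - (i : ℕ)) / (p - q)) ∧
    (∀ i j : Fin d, (j : ℕ) < (i : ℕ) →
      R⁻¹ i j ≤ 1 / (p - q)) := by
  have hq0 : 0 < q := by linarith
  have hqp : q < p := by linarith
  obtain rfl : P = atlasTransition d p q := Matrix.ext hP
  have hinv := one_sub_transpose_mul_atlasGreen hq0 hqp (by linarith) d
  subst hR
  rw [inv_eq_right_inv hinv]
  exact ⟨(isUnit_iff_isUnit_det _).mpr (isUnit_det_of_right_inverse hinv),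
    fun i j => atlasGreen_le_of_le hq0 hqp, fun i j => atlasGreen_le_of_lt hq0 hqp⟩

/-- Entrywise bounds on the inverse of the asymmetric Atlas reflection matrix `R = I - Pᵀ`.
Indices of `Fin d` are 0-based, so the paper's 1-based index `i` corresponds to `(i : ℕ) + 1`. -/
theorem stmt2 (d : ℕ) (hd : 1 ≤ d) (p : ℝ) (hp : 1/2 < p) (hp1 : p < 1)
    (q : ℝ) (hq : q = 1 - p)
    (P : Matrix (Fin d) (Fin d) ℝ)
    (hP : ∀ i j : Fin d, P i j =
      if (j : ℕ) = (i : ℕ) + 1 then p else if (i : ℕ) = (j : ℕ) + 1 then q else 0)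
    (R : Matrix (Fin d) (Fin d) ℝ) (hR : R = 1 - Pᵀ) :
    IsUnit R ∧
    (∀ i j : Fin d, (i : ℕ) ≤ (j : ℕ) →
      R⁻¹ i j ≤ (q/p) ^ ((j : ℕ) - (i : ℕ)) / (p - q)) ∧
    (∀ i j : Fin d, (j : ℕ) < (i : ℕ) →
      R⁻¹ i j ≤ 1 / (p - q)) :=
  stmt2_general d p hp hp1 q hq P hP R hR
end

section
/- Let p ∈ (1/2, 1), q = 1 − p, and for each integer k ≥ 1 let P_k be the k×k matrix with (P_k)_{i,i+1} = p, (P_k)_{i,i−1} = q and all other entries 0, and R_k = I − (P_k)ᵀ. Let b^{(k)}_i = ((R_k)⁻¹)_{i1} denote the entries of the first column of (R_k)⁻¹. Then for every k ≥ 1 and every 1 ≤ i ≤ k: b^{(k)}_i = ((p/q)^{i−1}/(p−q)) · ((p/q) − 1)((p/q)^{k+1−i} − 1)/((p/q)^{k+1} − 1), and moreover (p−q)/p² ≤ b^{(k)}_i ≤ p/(p−q). -/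
/-!
In 1-based indices, row `i` of `R b = e₁` says `b i = p * b (i - 1) + q * b (i + 1)` with
boundary values `b 0 = 1 / p` and `b (k + 1) = 0`. The recurrence has the solutions `1` and
`r ^ n`, `r = p / q`, so `p * b n` is the gambler's-ruin function
`(r ^ (k + 1) - r ^ n) / (r ^ (k + 1) - 1)`, and the bounds follow from
`1 - r⁻¹ ≤ p * b n ≤ 1` for `1 ≤ n ≤ k`. The matrix `R` is invertible
because `R * diagonal (t ^ j)` is strictly diagonally dominant for any `t` strictly between the
roots `1` and `p / q` of `q * t ^ 2 - t + p`.
-/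

open Matrix

def walkMatrix (k : ℕ) (p q : ℝ) : Matrix (Fin k) (Fin k) ℝ :=
  of fun i j => if (j : ℕ) = i + 1 then p else if (i : ℕ) = j + 1 then q else 0

theorem Matrix.inv_apply_eq_of_mulVec_eq_single {n R : Type*} [Fintype n] [DecidableEq n]
    [CommRing R] {A : Matrix n n R} (hA : IsUnit A.det) {v : n → R} {j : n}
    (h : A *ᵥ v = Pi.single j 1) (i : n) : A⁻¹ i j = v i := by
  have := congrArg (A⁻¹ *ᵥ ·) h
  simp only [mulVec_mulVec, nonsing_inv_mul _ hA, one_mulVec, mulVec_single_one] at this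
  exact congrFun this.symm i

/-- Gershgorin's theorem, applied to `(1 - M) * diagonal w`, whose rows are strictly diagonally
dominant. -/
theorem Matrix.det_one_sub_ne_zero_of_mulVec_lt {n : Type*} [Fintype n] [DecidableEq n]
    {M : Matrix n n ℝ} (hM : ∀ i j, 0 ≤ M i j) {w : n → ℝ} (hw : ∀ j, 0 < w j)
    (hMw : ∀ i, (M *ᵥ w) i < w i) : (1 - M).det ≠ 0 := by
  have hdom : ∀ i, ∑ j ∈ Finset.univ.erase i, ‖((1 - M) * diagonal w) i j‖ <
      ‖((1 - M) * diagonal w) i i‖ := by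
    intro i
    have hoff : ∀ j ∈ Finset.univ.erase i, ‖((1 - M) * diagonal w) i j‖ = M i j * w j := by
      intro j hj
      rw [mul_diagonal, Matrix.sub_apply, one_apply_ne (Finset.ne_of_mem_erase hj).symm, zero_sub,
        norm_mul, norm_neg, Real.norm_of_nonneg (hM i j), Real.norm_of_nonneg (hw j).le]
    calc ∑ j ∈ Finset.univ.erase i, ‖((1 - M) * diagonal w) i j‖
        = (M *ᵥ w) i - M i i * w i := by
          rw [Finset.sum_congr rfl hoff, mulVec, dotProduct,
            ← Finset.add_sum_erase _ _ (Finset.mem_univ i), add_sub_cancel_left]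
      _ < (1 - M i i) * w i := by linarith [hMw i]
      _ ≤ ‖((1 - M) * diagonal w) i i‖ := by
          rw [mul_diagonal, Matrix.sub_apply, one_apply_eq, norm_mul, Real.norm_of_nonneg (hw i).le]
          exact mul_le_mul_of_nonneg_right (Real.le_norm_self _) (hw i).le
  have h := det_ne_zero_of_sum_row_lt_diag hdom
  rw [det_mul] at h
  exact left_ne_zero_of_mul h

/-- For `r = p / q` this is the probability that the walk which steps down with probability `p`
and up with probability `q`, started at `n`, reaches `0` before `N`. -/
noncomputable def ruin (r : ℝ) (N n : ℕ) : ℝ := (r ^ N - r ^ n) / (r ^ N - 1)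

section ruin

variable {r : ℝ} {N n : ℕ}

theorem ruin_zero (h : r ^ N ≠ 1) : ruin r N 0 = 1 := by
  rw [ruin, pow_zero, div_self (sub_ne_zero.mpr h)]

theorem ruin_self : ruin r N N = 0 := by
  rw [ruin, sub_self, zero_div]

theorem ruin_harmonic {p q : ℝ} (hpq : p + q = 1) (hr : p + q * r ^ 2 = r) (N n : ℕ) :
    p * ruin r N n + q * ruin r N (n + 2) = ruin r N (n + 1) := by
  simp only [ruin]
  rw [mul_div_assoc', mul_div_assoc', ← add_div]
  congr 1
  linear_combination r ^ N * hpq - r ^ n * hr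

theorem ruin_eq_pow_mul (h : n ≤ N) : ruin r N n = r ^ n * (r ^ (N - n) - 1) / (r ^ N - 1) := by
  rw [ruin, mul_sub, pow_mul_pow_sub r h, mul_one]

theorem ruin_le_one (hr : 1 ≤ r) : ruin r N n ≤ 1 :=
  div_le_one_of_le₀ (by linarith [one_le_pow₀ (n := n) hr])
    (by linarith [one_le_pow₀ (n := N) hr])

theorem one_sub_inv_le_ruin (hr : 1 < r) (h : n < N) : 1 - r⁻¹ ≤ ruin r N n := by
  have hN : 1 < r ^ N := one_lt_pow₀ hr (by omega)
  have hn : r ^ n * r ≤ r ^ N := by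
    rw [← pow_succ]; exact pow_le_pow_right₀ hr.le h
  have hn' : r ^ n ≤ r⁻¹ * r ^ N := by
    rw [inv_mul_eq_div, le_div_iff₀ (by linarith)]
    exact hn
  rw [ruin, le_div_iff₀ (by linarith)]
  nlinarith [inv_lt_one_of_one_lt₀ hr]

end ruin

namespace walkMatrix

variable {k : ℕ} {p q : ℝ}

/-- The vector is indexed from `1` through `g`, so that its extensions `g 0` and `g (k + 1)` past
both ends enter only as boundary corrections. -/
theorem transpose_mulVec_shift (g : ℕ → ℝ) (i : Fin k) :
    ((walkMatrix k p q)ᵀ *ᵥ fun j => g (j + 1)) i =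
      p * g i + q * g (i + 2) - (if (i : ℕ) = 0 then p * g 0 else 0)
        - (if (i : ℕ) + 1 = k then q * g (k + 1) else 0) := by
  obtain ⟨i, hi⟩ := i
  have hsplit : ∀ j : ℕ, (if i = j + 1 then p else if j = i + 1 then q else 0) * g (j + 1) =
      (if j + 1 = i then p * g i else 0) + (if i + 1 = j then q * g (i + 2) else 0) := by
    intro j
    split_ifs <;> first | omega | (subst_vars; ring)
  simp only [mulVec, dotProduct, transpose_apply, walkMatrix, of_apply]
  rw [Fin.sum_univ_eq_sum_range
      (fun j => (if i = j + 1 then p else if j = i + 1 then q else 0) * g (j + 1)),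
    Finset.sum_congr rfl fun j _ => hsplit j, Finset.sum_add_distrib, Finset.sum_ite_eq]
  rcases i with _ | m
  · simp only [Nat.add_eq_zero_iff, one_ne_zero, and_false, ↓reduceIte, Finset.sum_const_zero,
      zero_add, Finset.mem_range, add_sub_cancel_left]
    split_ifs <;> first | omega | (subst_vars; ring)
  · simp only [Nat.add_right_cancel_iff, Finset.sum_ite_eq', Finset.mem_range, Nat.add_eq_zero_iff,
      one_ne_zero, and_false, ↓reduceIte, sub_zero]
    split_ifs <;> first | omega | (subst_vars; ring)

theorem transpose_apply_nonneg (hp : 0 ≤ p) (hq : 0 ≤ q) (i j : Fin k) :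
    0 ≤ (walkMatrix k p q)ᵀ i j := by
  simp only [transpose_apply, walkMatrix, of_apply]
  split_ifs <;> first | exact hp | exact hq | exact le_rfl

theorem det_one_sub_transpose_ne_zero (hp : 0 ≤ p) (hq : 0 < q) (hpq : 4 * p * q < 1) :
    (1 - (walkMatrix k p q)ᵀ).det ≠ 0 := by
  -- `1 / (2 * q)` minimizes `q * t ^ 2 - t + p`, whose minimum `p - 1 / (4 * q)` is negative.
  set t : ℝ := 1 / (2 * q) with ht
  have ht0 : 0 < t := by positivity
  have hstep : p + q * t ^ 2 < t := by
    rw [ht]; field_simp; nlinarith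
  refine Matrix.det_one_sub_ne_zero_of_mulVec_lt (transpose_apply_nonneg hp hq.le)
    (w := fun j => t ^ ((j : ℕ) + 1)) (fun j => by positivity) fun i => ?_
  calc ((walkMatrix k p q)ᵀ *ᵥ fun j => t ^ ((j : ℕ) + 1)) i
      ≤ p * t ^ (i : ℕ) + q * t ^ ((i : ℕ) + 2) := by
        rw [transpose_mulVec_shift (fun n => t ^ n)]
        have := pow_pos ht0
        split_ifs <;> nlinarith [this 0, this (k + 1)]
    _ = t ^ (i : ℕ) * (p + q * t ^ 2) := by ring
    _ < t ^ (i : ℕ) * t := mul_lt_mul_of_pos_left hstep (pow_pos ht0 _)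
    _ = t ^ ((i : ℕ) + 1) := (pow_succ t i).symm

theorem one_sub_transpose_mulVec_ruin {r : ℝ} (hp : p ≠ 0) (hpq : p + q = 1)
    (hr : p + q * r ^ 2 = r) (hrk : r ^ (k + 1) ≠ 1) (hk : 0 < k) :
    (1 - (walkMatrix k p q)ᵀ) *ᵥ (fun j : Fin k => ruin r (k + 1) ((j : ℕ) + 1) / p) =
      Pi.single ⟨0, hk⟩ 1 := by
  ext i
  have harm := ruin_harmonic hpq hr (k + 1) (i : ℕ)
  rw [sub_mulVec, one_mulVec, Pi.sub_apply, transpose_mulVec_shift (fun n => ruin r (k + 1) n / p),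
    ruin_zero hrk, ruin_self, mul_div_assoc', mul_div_assoc', ← add_div, harm,
    mul_one_div_cancel hp, zero_div, mul_zero, Pi.single_apply]
  simp only [Fin.ext_iff]
  split_ifs <;> first | omega | ring

end walkMatrix

/-- Explicit formula and bounds for the first column `b⁽ᵏ⁾` of the inverse of the `k × k`
asymmetric Atlas reflection matrix. Indices of `Fin k` are 0-based, so the paper's 1-based
index `i` corresponds to `(i : ℕ) + 1`, and the first column has index `⟨0, hk⟩`. -/
theorem stmt3 (p : ℝ) (hp : 1/2 < p) (hp1 : p < 1) (q : ℝ) (hq : q = 1 - p)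
    (k : ℕ) (hk : 1 ≤ k)
    (P : Matrix (Fin k) (Fin k) ℝ)
    (hP : ∀ i j : Fin k, P i j =
      if (j : ℕ) = (i : ℕ) + 1 then p else if (i : ℕ) = (j : ℕ) + 1 then q else 0)
    (R : Matrix (Fin k) (Fin k) ℝ) (hR : R = 1 - Pᵀ)
    (i : Fin k) :
    R⁻¹ i ⟨0, hk⟩ = ((p/q) ^ (i : ℕ) / (p - q)) *
      ((p/q - 1) * ((p/q) ^ (k - (i : ℕ)) - 1)) / ((p/q) ^ (k + 1) - 1) ∧
    (p - q) / p ^ 2 ≤ R⁻¹ i ⟨0, hk⟩ ∧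
    R⁻¹ i ⟨0, hk⟩ ≤ p / (p - q) := by
  have hq0 : 0 < q := by linarith
  have hpq : p + q = 1 := by linarith
  have hwalk : 4 * p * q < 1 := by nlinarith
  have hr1 : 1 < p / q := by rw [one_lt_div hq0]; linarith
  have hr : p + q * (p / q) ^ 2 = p / q := by
    field_simp
    linarith
  have hrk : (p / q) ^ (k + 1) ≠ 1 := (one_lt_pow₀ hr1 (by omega)).ne'
  obtain rfl : P = walkMatrix k p q := by ext i j; rw [hP, walkMatrix, of_apply]
  subst hR
  have hcol :
      (1 - (walkMatrix k p q)ᵀ)⁻¹ i ⟨0, hk⟩ = ruin (p / q) (k + 1) ((i : ℕ) + 1) / p :=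
    inv_apply_eq_of_mulVec_eq_single
      (isUnit_iff_ne_zero.mpr (walkMatrix.det_one_sub_transpose_ne_zero (by linarith) hq0 hwalk))
      (walkMatrix.one_sub_transpose_mulVec_ruin (by linarith) hpq hr hrk hk) i
  rw [hcol]
  refine ⟨?_, ?_, ?_⟩
  · have hpq' : p - q ≠ 0 := by linarith
    have hden : (p / q) ^ (k + 1) - 1 ≠ 0 := sub_ne_zero.mpr hrk
    rw [ruin_eq_pow_mul (by omega), Nat.add_sub_add_right, pow_succ]
    field_simp
  · calc (p - q) / p ^ 2 = (1 - (p / q)⁻¹) / p := by field_simp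
      _ ≤ ruin (p / q) (k + 1) ((i : ℕ) + 1) / p :=
          div_le_div_of_nonneg_right (one_sub_inv_le_ruin hr1 (by omega)) (by linarith)
  · calc ruin (p / q) (k + 1) ((i : ℕ) + 1) / p ≤ 1 / p :=
          div_le_div_of_nonneg_right (ruin_le_one hr1.le) (by linarith)
      _ ≤ p / (p - q) := by
          rw [div_le_div_iff₀ (by linarith) (by linarith)]
          nlinarith
end

section
/- Let d ≥ 1 and let P be a d×d real matrix with nonnegative entries such that (i) P_{ij} = 0 whenever |i − j| > 1, and (ii) every column sum satisfies ∑_{i=1}^d P_{ij} ≤ α' for some α' ∈ (0, 1). Then I − Pᵀ is invertible with (I − Pᵀ)⁻¹ = ∑_{n=0}^∞ (Pᵀ)ⁿ, and for all 1 ≤ i ≤ j ≤ d one has ((I − Pᵀ)⁻¹)_{ij} ≤ (α')^{j−i}/(1 − α'). -/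
open Matrix

set_option maxHeartbeats 800000

/-- For a banded nonnegative matrix `P` with column sums at most `α' ∈ (0,1)`, `I - Pᵀ` is
invertible with Neumann-series inverse, and the upper-triangular entries of the inverse satisfy
a geometric bound. Indices of `Fin d` are 0-based. -/
theorem stmt5 (d : ℕ) (hd : 1 ≤ d) (P : Matrix (Fin d) (Fin d) ℝ)
    (α' : ℝ) (hα0 : 0 < α') (hα1 : α' < 1)
    (hnn : ∀ i j, 0 ≤ P i j)
    (hband : ∀ i j : Fin d, ((i : ℕ) + 1 < (j : ℕ) ∨ (j : ℕ) + 1 < (i : ℕ)) → P i j = 0)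
    (hcol : ∀ j, ∑ i, P i j ≤ α') :
    IsUnit (1 - Pᵀ) ∧
    (∀ i j, (1 - Pᵀ)⁻¹ i j = ∑' n, (Pᵀ ^ n) i j) ∧
    (∀ i j : Fin d, (i : ℕ) ≤ (j : ℕ) →
      (1 - Pᵀ)⁻¹ i j ≤ α' ^ ((j : ℕ) - (i : ℕ)) / (1 - α')) := by
  set Q : Matrix (Fin d) (Fin d) ℝ := Pᵀ with hQ
  have hQnn : ∀ i j, 0 ≤ Q i j := fun i j => hnn j i
  -- nonnegativity of powers
  have h0 : ∀ n (i j : Fin d), 0 ≤ (Q ^ n) i j := by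
    intro n
    induction n with
    | zero =>
      intro i j
      rw [pow_zero]
      rcases eq_or_ne i j with h | h
      · subst h; rw [Matrix.one_apply_eq]; exact zero_le_one
      · rw [Matrix.one_apply_ne h]
    | succ n ih =>
      intro i j
      rw [pow_succ, Matrix.mul_apply]
      exact Finset.sum_nonneg fun k _ => mul_nonneg (ih i k) (hQnn k j)
  -- row sums of powers bounded by α'^n
  have hrow : ∀ n (i : Fin d), ∑ j, (Q ^ n) i j ≤ α' ^ n := by
    intro n
    induction n with
    | zero =>
      intro i
      simp [Matrix.one_apply, Finset.sum_ite_eq]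
    | succ n ih =>
      intro i
      rw [pow_succ']
      calc ∑ j, (Q * Q ^ n) i j = ∑ j, ∑ k, Q i k * (Q ^ n) k j := by
            simp [Matrix.mul_apply]
        _ = ∑ k, Q i k * ∑ j, (Q ^ n) k j := by
            rw [Finset.sum_comm]; simp [Finset.mul_sum]
        _ ≤ ∑ k, Q i k * α' ^ n := by
            apply Finset.sum_le_sum
            intro k _
            exact mul_le_mul_of_nonneg_left (ih k) (hQnn i k)
        _ = (∑ k, Q i k) * α' ^ n := by rw [Finset.sum_mul]
        _ ≤ α' * α' ^ n := by
            apply mul_le_mul_of_nonneg_right _ (pow_nonneg hα0.le n)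
            simpa [hQ, Matrix.transpose_apply] using hcol i
        _ = α' ^ (n + 1) := by rw [pow_succ']
  have hentry : ∀ n (i j : Fin d), (Q ^ n) i j ≤ α' ^ n := by
    intro n i j
    refine le_trans ?_ (hrow n i)
    exact Finset.single_le_sum (fun k _ => h0 n i k) (Finset.mem_univ j)
  -- band structure of powers
  have hband' : ∀ n (i j : Fin d), (i : ℕ) + n < (j : ℕ) → (Q ^ n) i j = 0 := by
    intro n
    induction n with
    | zero =>
      intro i j h
      have hne : i ≠ j := fun he => by subst he; omega
      rw [pow_zero, Matrix.one_apply_ne hne]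
    | succ n ih =>
      intro i j h
      rw [pow_succ', Matrix.mul_apply]
      apply Finset.sum_eq_zero
      intro k _
      by_cases hk : (i : ℕ) + 1 < (k : ℕ)
      · have : Q i k = 0 := hband k i (Or.inr hk)
        rw [this, zero_mul]
      · have : (k : ℕ) + n < (j : ℕ) := by omega
        rw [ih k j this, mul_zero]
  -- summability
  have hgeom : Summable (fun n : ℕ => α' ^ n) :=
    summable_geometric_of_lt_one hα0.le hα1
  have hsummable : ∀ i j, Summable (fun n => (Q ^ n) i j) := fun i j =>
    Summable.of_nonneg_of_le (fun n => h0 n i j) (fun n => hentry n i j) hgeom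
  -- the candidate inverse
  set S : Matrix (Fin d) (Fin d) ℝ := Matrix.of (fun i j => ∑' n, (Q ^ n) i j) with hS
  have hSapp : ∀ i j, S i j = ∑' n, (Q ^ n) i j := fun i j => rfl
  have hQS : ∀ i j, (Q * S) i j = ∑' n, (Q ^ (n + 1)) i j := by
    intro i j
    rw [Matrix.mul_apply]
    have : ∀ k : Fin d, Q i k * S k j = ∑' n, Q i k * (Q ^ n) k j := by
      intro k
      rw [hSapp, tsum_mul_left]
    simp_rw [this]
    rw [← Summable.tsum_finsetSum (fun k _ => (hsummable k j).mul_left _)]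
    refine tsum_congr fun n => ?_
    rw [pow_succ', Matrix.mul_apply]
  have hSQ : ∀ i j, (S * Q) i j = ∑' n, (Q ^ (n + 1)) i j := by
    intro i j
    rw [Matrix.mul_apply]
    have : ∀ k : Fin d, S i k * Q k j = ∑' n, (Q ^ n) i k * Q k j := by
      intro k
      rw [hSapp, tsum_mul_right]
    simp_rw [this]
    rw [← Summable.tsum_finsetSum (fun k _ => (hsummable i k).mul_right _)]
    refine tsum_congr fun n => ?_
    rw [pow_succ, Matrix.mul_apply]
  have hSsplit : ∀ i j, S i j = (1 : Matrix (Fin d) (Fin d) ℝ) i j + ∑' n, (Q ^ (n + 1)) i j := by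
    intro i j
    rw [hSapp, Summable.tsum_eq_zero_add (hsummable i j), pow_zero]
  have h1 : (1 - Q) * S = 1 := by
    ext i j
    rw [Matrix.sub_mul, Matrix.one_mul, Matrix.sub_apply, hQS, hSsplit]
    ring
  have h2 : S * (1 - Q) = 1 := by
    ext i j
    rw [Matrix.mul_sub, Matrix.mul_one, Matrix.sub_apply, hSQ, hSsplit]
    ring
  have hunit : IsUnit (1 - Q) := ⟨⟨1 - Q, S, h1, h2⟩, rfl⟩
  have hinv : (1 - Q)⁻¹ = S := Matrix.inv_eq_right_inv h1
  refine ⟨hunit, fun i j => by rw [hinv, hSapp], ?_⟩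
  intro i j hij
  rw [hinv, hSapp]
  set k : ℕ := (j : ℕ) - (i : ℕ) with hk
  have hzero : ∀ n ∈ Finset.range k, (Q ^ n) i j = 0 := by
    intro n hn
    rw [Finset.mem_range] at hn
    exact hband' n i j (by omega)
  have hsplit := Summable.sum_add_tsum_nat_add k (hsummable i j)
  rw [Finset.sum_eq_zero hzero, zero_add] at hsplit
  rw [← hsplit]
  have hgs : Summable (fun n : ℕ => α' ^ (n + k)) := by
    simpa [pow_add] using hgeom.mul_right (α' ^ k)
  have hls : Summable (fun n => (Q ^ (n + k)) i j) :=
    Summable.of_nonneg_of_le (fun n => h0 (n + k) i j) (fun n => hentry (n + k) i j) hgs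
  have hle : ∑' n, (Q ^ (n + k)) i j ≤ ∑' n : ℕ, α' ^ (n + k) :=
    Summable.tsum_le_tsum (fun n => hentry (n + k) i j) hls hgs
  refine hle.trans ?_
  have : ∑' n : ℕ, α' ^ (n + k) = α' ^ k * ∑' n : ℕ, α' ^ n := by
    rw [← tsum_mul_left]
    congr 1; ext n; rw [pow_add]; ring
  rw [this, tsum_geometric_of_lt_one hα0.le hα1]
  rw [div_eq_mul_inv]
end

section
/- Let d ≥ 1 and let P be the d×d matrix with P_{i,i+1} = 1/2 for 1 ≤ i ≤ d−1, P_{i,i−1} = 1/2 for 2 ≤ i ≤ d, and all other entries 0, and set R = I − Pᵀ. Then R is invertible and (R⁻¹)_{ij} = 2i(1 − j/(d+1)) for all 1 ≤ i ≤ j ≤ d, and (R⁻¹)_{ij} = 2j(1 − i/(d+1)) for all 1 ≤ j < i ≤ d. -/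
/-!
Since `P` is symmetric, `R = I - P`, which up to the factor `1/2` is the Dirichlet Laplacian
`2I - A` of the path `1, …, d`, whose inverse is its Green's function `G(a, b) = min(a, b) (d + 1 - max(a, b)) / (d + 1)`.
For fixed `b`, `a ↦ min(a, b) (d + 1 - max(a, b))` is piecewise linear, vanishes at `a = 0` and
`a = d + 1`, and its slope drops by `d + 1` at `a = b`; so its second difference is
`(d + 1) δ_{ab}`, which is exactly `R * (2G) = I`.
-/

open Matrix Finset

def pathGreen (n a b : ℤ) : ℤ := min a b * (n - max a b)

theorem pathGreen_comm (n a b : ℤ) : pathGreen n a b = pathGreen n b a := by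
  rw [pathGreen, pathGreen, min_comm, max_comm]

theorem pathGreen_of_le {n a b : ℤ} (h : a ≤ b) : pathGreen n a b = a * (n - b) := by
  rw [pathGreen, min_eq_left h, max_eq_right h]

theorem pathGreen_zero_left {n b : ℤ} (hb : 0 ≤ b) : pathGreen n 0 b = 0 := by
  simp [pathGreen_of_le hb]

theorem pathGreen_self_left {n b : ℤ} (hb : b ≤ n) : pathGreen n n b = 0 := by
  simp [pathGreen, max_eq_left hb]

theorem pathGreen_second_diff (n a b : ℤ) :
    2 * pathGreen n (a + 1) b - pathGreen n a b - pathGreen n (a + 2) b =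
      if a + 1 = b then n else 0 := by
  unfold pathGreen
  rcases lt_trichotomy (a + 1) b with h | rfl | h
  · rw [if_neg h.ne, min_eq_left h.le, max_eq_right h.le, min_eq_left (by omega),
      max_eq_right (by omega), min_eq_left (by omega), max_eq_right (by omega)]
    ring
  · rw [if_pos rfl, min_self, max_self, min_eq_left (by omega), max_eq_right (by omega),
      min_eq_right (by omega), max_eq_left (by omega)]
    ring
  · rw [if_neg h.ne', min_eq_right (by omega), max_eq_left (by omega), min_eq_right (by omega),
      max_eq_left (by omega), min_eq_right (by omega), max_eq_left (by omega)]
    ring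

/-- `f` is indexed from `1`; its values at `0` and `d + 1` stand for the missing neighbours of the
two endpoints of the path. -/
theorem sum_path_neighbors_mul {d i : ℕ} (hi : i < d) (c : ℝ) (f : ℕ → ℝ)
    (h0 : f 0 = 0) (hd : f (d + 1) = 0) :
    ∑ k : Fin d, (if i = (k : ℕ) + 1 then c else if (k : ℕ) = i + 1 then c else 0) * f (k + 1) =
      c * (f i + f (i + 2)) := by
  have split (k : ℕ) : (if i = k + 1 then c else if k = i + 1 then c else 0) * f (k + 1) =
      (if k = i - 1 then c * f i else 0) + (if k = i + 1 then c * f (i + 2) else 0) := by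
    rcases eq_or_ne i (k + 1) with rfl | h1
    · simp [show k ≠ k + 1 + 1 by omega]
    rcases eq_or_ne k (i + 1) with rfl | h2
    · simp [h1, show i + 1 ≠ i - 1 by omega]
    rcases eq_or_ne k (i - 1) with rfl | h3
    · simp [show i = 0 by omega, h0]
    · simp [h1, h2, h3]
  rw [Fin.sum_univ_eq_sum_range
    (fun k => (if i = k + 1 then c else if k = i + 1 then c else 0) * f (k + 1))]
  simp only [split, sum_add_distrib, sum_ite_eq', mem_range, if_pos (show i - 1 < d by omega)]
  split_ifs with h
  · ring
  · rw [show i + 2 = d + 1 by omega, hd]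
    ring

noncomputable def atlasInverse (d : ℕ) : Matrix (Fin d) (Fin d) ℝ :=
  of fun i j => 2 * (pathGreen (d + 1) ((i : ℕ) + 1) ((j : ℕ) + 1) : ℝ) / (d + 1)

theorem atlasInverse_comm (d : ℕ) (i j : Fin d) : atlasInverse d i j = atlasInverse d j i := by
  rw [atlasInverse, of_apply, of_apply, pathGreen_comm]

theorem atlasInverse_apply_of_le {d : ℕ} {i j : Fin d} (h : (i : ℕ) ≤ j) :
    atlasInverse d i j = 2 * (((i : ℕ) : ℝ) + 1) * (1 - (((j : ℕ) : ℝ) + 1) / ((d : ℝ) + 1)) := by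
  rw [atlasInverse, of_apply, pathGreen_of_le (by omega)]
  push_cast
  field_simp

theorem one_sub_transpose_mul_atlasInverse {d : ℕ} {P : Matrix (Fin d) (Fin d) ℝ}
    (hP : ∀ i j : Fin d, P i j =
      if (j : ℕ) = (i : ℕ) + 1 then 1/2 else if (i : ℕ) = (j : ℕ) + 1 then 1/2 else 0) :
    (1 - Pᵀ) * atlasInverse d = 1 := by
  ext i j
  set f : ℕ → ℝ := fun m => 2 * (pathGreen (d + 1) m ((j : ℕ) + 1) : ℝ) / (d + 1)
  have hf0 : f 0 = 0 := by simp [f, pathGreen_zero_left (by omega : (0 : ℤ) ≤ (j : ℕ) + 1)]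
  have hfd : f (d + 1) = 0 := by
    simp [f, pathGreen_self_left (by omega : ((j : ℕ) : ℤ) + 1 ≤ d + 1)]
  have hrow : ∑ k : Fin d, P k i * atlasInverse d k j = 1 / 2 * (f i + f (i + 2)) := by
    simp only [hP]
    exact sum_path_neighbors_mul i.isLt _ f hf0 hfd
  have hdiff : (2 * pathGreen (d + 1) ((i : ℕ) + 1) ((j : ℕ) + 1)
      - pathGreen (d + 1) (i : ℕ) ((j : ℕ) + 1) - pathGreen (d + 1) ((i : ℕ) + 2) ((j : ℕ) + 1) : ℝ)
      = if i = j then (d : ℝ) + 1 else 0 := by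
    exact_mod_cast (pathGreen_second_diff (d + 1) (i : ℕ) ((j : ℕ) + 1)).trans
      (by simp [Fin.ext_iff])
  rw [sub_mul, one_mul, Matrix.sub_apply, mul_apply]
  simp only [transpose_apply]
  rw [hrow]
  simp only [f, atlasInverse, of_apply, one_apply]
  push_cast
  split_ifs at hdiff ⊢ <;> field_simp <;> linear_combination hdiff

/-- Indices of `Fin d` are 0-based: the paper's index `i` corresponds to `(i : ℕ) + 1`. -/
theorem stmt7_general (d : ℕ)
    (P : Matrix (Fin d) (Fin d) ℝ)
    (hP : ∀ i j : Fin d, P i j =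
      if (j : ℕ) = (i : ℕ) + 1 then 1/2 else if (i : ℕ) = (j : ℕ) + 1 then 1/2 else 0)
    (R : Matrix (Fin d) (Fin d) ℝ) (hR : R = 1 - Pᵀ) :
    IsUnit R ∧
    (∀ i j : Fin d, (i : ℕ) ≤ (j : ℕ) →
      R⁻¹ i j = 2 * (((i : ℕ) : ℝ) + 1) * (1 - (((j : ℕ) : ℝ) + 1) / ((d : ℝ) + 1))) ∧
    (∀ i j : Fin d, (j : ℕ) < (i : ℕ) →
      R⁻¹ i j = 2 * (((j : ℕ) : ℝ) + 1) * (1 - (((i : ℕ) : ℝ) + 1) / ((d : ℝ) + 1))) := by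
  have hRS : R * atlasInverse d = 1 := hR ▸ one_sub_transpose_mul_atlasInverse hP
  have hinv : R⁻¹ = atlasInverse d := inv_eq_right_inv hRS
  refine ⟨IsUnit.of_mul_eq_one _ hRS, fun i j hij => ?_, fun i j hji => ?_⟩
  · rw [hinv, atlasInverse_apply_of_le hij]
  · rw [hinv, atlasInverse_comm, atlasInverse_apply_of_le hji.le]

/-- Explicit inverse of the symmetric Atlas reflection matrix `R = I - Pᵀ`.
Indices of `Fin d` are 0-based, so the paper's 1-based index `i` corresponds to `(i : ℕ) + 1`. -/
theorem stmt7 (d : ℕ) (hd : 1 ≤ d)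
    (P : Matrix (Fin d) (Fin d) ℝ)
    (hP : ∀ i j : Fin d, P i j =
      if (j : ℕ) = (i : ℕ) + 1 then 1/2 else if (i : ℕ) = (j : ℕ) + 1 then 1/2 else 0)
    (R : Matrix (Fin d) (Fin d) ℝ) (hR : R = 1 - Pᵀ) :
    IsUnit R ∧
    (∀ i j : Fin d, (i : ℕ) ≤ (j : ℕ) →
      R⁻¹ i j = 2 * (((i : ℕ) : ℝ) + 1) * (1 - (((j : ℕ) : ℝ) + 1) / ((d : ℝ) + 1))) ∧
    (∀ i j : Fin d, (j : ℕ) < (i : ℕ) →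
      R⁻¹ i j = 2 * (((j : ℕ) : ℝ) + 1) * (1 - (((i : ℕ) : ℝ) + 1) / ((d : ℝ) + 1))) :=
  stmt7_general d P hP R hR
end

section
/- Let d ≥ 2, let A be a d×d real matrix with nonnegative entries, and suppose there are constants C, M ≥ 1 and α ∈ (0, 1) with A_{ij} ≤ C α^{j−i} for all 1 ≤ i ≤ j ≤ d and A_{ij} ≤ M for all 1 ≤ i, j ≤ d. Let α < β < δ < 1 and let x ∈ ℝ^d have nonnegative entries. Then for every integer 1 ≤ d' ≤ d−1, ∑_{i=d'+1}^d β^i (A x)_i ≤ C̃ · (max_{1 ≤ j ≤ d} δ^j x_j) · (β/δ)^{d'+1}, where C̃ = M/((1−δ)(1−β/δ)) + C(α/δ)/((1−α/δ)(1−β/δ)). -/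
open Matrix Finset

lemma geom_tail_sum {ι : Type*} {r : ℝ} (h0 : 0 ≤ r) (h1 : r < 1)
    (s : Finset ι) (g : ι → ℕ) (hg : Set.InjOn g s) :
    ∑ j ∈ s, r ^ g j ≤ (1 - r)⁻¹ := by
  have hsum : Summable (fun k : ℕ => r ^ k) := summable_geometric_of_lt_one h0 h1
  calc ∑ j ∈ s, r ^ g j
      = ∑ k ∈ s.image g, r ^ k :=
        (Finset.sum_image (fun a ha b hb h => hg ha hb h)).symm
    _ ≤ ∑' k : ℕ, r ^ k := Summable.sum_le_tsum _ (fun k _ => pow_nonneg h0 k) hsum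
    _ = (1 - r)⁻¹ := tsum_geometric_of_lt_one h0 h1

lemma geom_tail_sum' {ι : Type*} {r : ℝ} (h0 : 0 ≤ r) (h1 : r < 1)
    (s : Finset ι) (g : ι → ℕ) (m : ℕ) (hm : ∀ j ∈ s, m ≤ g j)
    (hg : Set.InjOn g s) :
    ∑ j ∈ s, r ^ g j ≤ r ^ m * (1 - r)⁻¹ := by
  have hinj : Set.InjOn (fun j => g j - m) s := by
    intro a ha b hb h
    apply hg ha hb
    have := hm a ha
    have := hm b hb
    simp only at h
    omega
  calc ∑ j ∈ s, r ^ g j = ∑ j ∈ s, r ^ m * r ^ (g j - m) := by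
        refine Finset.sum_congr rfl fun j hj => ?_
        rw [← pow_add]
        congr 1
        have := hm j hj
        omega
    _ = r ^ m * ∑ j ∈ s, r ^ (g j - m) := by rw [Finset.mul_sum]
    _ ≤ r ^ m * (1 - r)⁻¹ :=
        mul_le_mul_of_nonneg_left (geom_tail_sum h0 h1 s _ hinj) (pow_nonneg h0 m)

/-- Tail bound for a weighted sum: under the geometric off-diagonal bound and uniform bound on
the nonnegative matrix `A`, the tail `∑_{i=d'+1}^d βⁱ (Ax)_i` is controlled by the weighted
sup-norm of `x`. Indices of `Fin d` are 0-based, so the paper's 1-based index `i` corresponds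
to `(i : ℕ) + 1`. -/
theorem stmt9 (d : ℕ) (hd : 2 ≤ d) (A : Matrix (Fin d) (Fin d) ℝ)
    (C M α β δ : ℝ) (hC : 1 ≤ C) (hM : 1 ≤ M)
    (hα0 : 0 < α) (hαβ : α < β) (hβδ : β < δ) (hδ1 : δ < 1)
    (hnn : ∀ i j, 0 ≤ A i j)
    (hgeo : ∀ i j : Fin d, (i : ℕ) ≤ (j : ℕ) → A i j ≤ C * α ^ ((j : ℕ) - (i : ℕ)))
    (hbdd : ∀ i j, A i j ≤ M)
    (x : Fin d → ℝ) (hx : ∀ i, 0 ≤ x i)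
    (d' : ℕ) (hd'1 : 1 ≤ d') (hd'2 : d' ≤ d - 1) :
    ∑ i ∈ univ.filter (fun i : Fin d => d' ≤ (i : ℕ)), β ^ ((i : ℕ) + 1) * (A *ᵥ x) i ≤
      (M / ((1 - δ) * (1 - β / δ)) + C * (α / δ) / ((1 - α / δ) * (1 - β / δ))) *
        (univ.sup' ⟨⟨0, by omega⟩, mem_univ _⟩ (fun j : Fin d => δ ^ ((j : ℕ) + 1) * x j)) *
        (β / δ) ^ (d' + 1) := by
  have hβ0 : 0 < β := hα0.trans hαβ
  have hδ0 : 0 < δ := hβ0.trans hβδ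
  have hαδ : α < δ := hαβ.trans hβδ
  have hr0 : 0 ≤ α / δ := (div_pos hα0 hδ0).le
  have hr1 : α / δ < 1 := (div_lt_one hδ0).2 hαδ
  have hs0 : 0 ≤ β / δ := (div_pos hβ0 hδ0).le
  have hs1 : β / δ < 1 := (div_lt_one hδ0).2 hβδ
  have hM0 : 0 ≤ M := by linarith
  have hC0 : 0 ≤ C := by linarith
  set N := univ.sup' ⟨(⟨0, by omega⟩ : Fin d), mem_univ _⟩
    (fun j : Fin d => δ ^ ((j : ℕ) + 1) * x j) with hNdef
  have hNx : ∀ j : Fin d, δ ^ ((j : ℕ) + 1) * x j ≤ N := fun j => by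
    rw [hNdef]
    exact Finset.le_sup' (fun j : Fin d => δ ^ ((j : ℕ) + 1) * x j) (mem_univ j)
  have hN0 : 0 ≤ N := by
    refine le_trans ?_ (hNx ⟨0, by omega⟩)
    have := hx ⟨0, by omega⟩
    positivity
  set K := M / (1 - δ) + C * (α / δ) / (1 - α / δ) with hKdef
  have hδ1' : 0 < 1 - δ := by linarith
  have hr1' : 0 < 1 - α / δ := by linarith
  have hs1' : 0 < 1 - β / δ := by linarith
  have hK0 : 0 ≤ K := by
    have h1 : 0 ≤ M / (1 - δ) := div_nonneg hM0 hδ1'.le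
    have h2 : 0 ≤ C * (α / δ) / (1 - α / δ) := div_nonneg (mul_nonneg hC0 hr0) hr1'.le
    rw [hKdef]
    exact add_nonneg h1 h2
  -- key pointwise bound
  have key : ∀ i : Fin d, δ ^ ((i : ℕ) + 1) * (A *ᵥ x) i ≤ K * N := by
    intro i
    have hmv : (A *ᵥ x) i = ∑ j, A i j * x j := by
      simp [Matrix.mulVec, dotProduct]
    rw [hmv, Finset.mul_sum]
    rw [← Finset.sum_filter_add_sum_filter_not univ (fun j : Fin d => (j : ℕ) ≤ (i : ℕ))]
    have h1 : ∑ j ∈ univ.filter (fun j : Fin d => (j : ℕ) ≤ (i : ℕ)),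
        δ ^ ((i : ℕ) + 1) * (A i j * x j) ≤ M / (1 - δ) * N := by
      calc ∑ j ∈ univ.filter (fun j : Fin d => (j : ℕ) ≤ (i : ℕ)),
            δ ^ ((i : ℕ) + 1) * (A i j * x j)
          ≤ ∑ j ∈ univ.filter (fun j : Fin d => (j : ℕ) ≤ (i : ℕ)),
            M * N * δ ^ ((i : ℕ) - (j : ℕ)) := by
            refine Finset.sum_le_sum fun j hj => ?_
            have hji : (j : ℕ) ≤ (i : ℕ) := by
              simpa using hj
            have he : (i : ℕ) + 1 = ((i : ℕ) - (j : ℕ)) + ((j : ℕ) + 1) := by omega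
            rw [he, pow_add]
            have hb : A i j * (δ ^ ((j : ℕ) + 1) * x j) ≤ M * N :=
              mul_le_mul (hbdd i j) (hNx j) (mul_nonneg (by positivity) (hx j)) hM0
            calc δ ^ ((i : ℕ) - (j : ℕ)) * δ ^ ((j : ℕ) + 1) * (A i j * x j)
                = δ ^ ((i : ℕ) - (j : ℕ)) * (A i j * (δ ^ ((j : ℕ) + 1) * x j)) := by ring
              _ ≤ δ ^ ((i : ℕ) - (j : ℕ)) * (M * N) :=
                  mul_le_mul_of_nonneg_left hb (by positivity)
              _ = M * N * δ ^ ((i : ℕ) - (j : ℕ)) := by ring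
        _ = M * N * ∑ j ∈ univ.filter (fun j : Fin d => (j : ℕ) ≤ (i : ℕ)),
              δ ^ ((i : ℕ) - (j : ℕ)) := by rw [← Finset.mul_sum]
        _ ≤ M * N * (1 - δ)⁻¹ := by
            refine mul_le_mul_of_nonneg_left ?_ (mul_nonneg hM0 hN0)
            refine geom_tail_sum hδ0.le hδ1 _ (fun j : Fin d => (i : ℕ) - (j : ℕ)) ?_
            intro a ha b hb h
            simp only [coe_filter, Set.mem_setOf_eq, mem_univ, true_and] at ha hb
            have h' : (i : ℕ) - (a : ℕ) = (i : ℕ) - (b : ℕ) := h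
            exact Fin.ext (by omega)
        _ = M / (1 - δ) * N := by rw [div_eq_mul_inv]; ring
    have h2 : ∑ j ∈ univ.filter (fun j : Fin d => ¬ (j : ℕ) ≤ (i : ℕ)),
        δ ^ ((i : ℕ) + 1) * (A i j * x j) ≤ C * (α / δ) / (1 - α / δ) * N := by
      calc ∑ j ∈ univ.filter (fun j : Fin d => ¬ (j : ℕ) ≤ (i : ℕ)),
            δ ^ ((i : ℕ) + 1) * (A i j * x j)
          ≤ ∑ j ∈ univ.filter (fun j : Fin d => ¬ (j : ℕ) ≤ (i : ℕ)),
            C * N * (α / δ) ^ ((j : ℕ) - (i : ℕ)) := by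
            refine Finset.sum_le_sum fun j hj => ?_
            have hij : (i : ℕ) < (j : ℕ) := by
              simp only [mem_filter, mem_univ, true_and, not_le] at hj
              exact hj
            have hA := hgeo i j hij.le
            have hdd : δ ^ ((i : ℕ) + 1) * α ^ ((j : ℕ) - (i : ℕ))
                = (α / δ) ^ ((j : ℕ) - (i : ℕ)) * δ ^ ((j : ℕ) + 1) := by
              have he : (j : ℕ) + 1 = ((j : ℕ) - (i : ℕ)) + ((i : ℕ) + 1) := by omega
              rw [he, pow_add, div_pow]
              field_simp
              rw [pow_add]
              ring
            calc δ ^ ((i : ℕ) + 1) * (A i j * x j)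
                ≤ δ ^ ((i : ℕ) + 1) * (C * α ^ ((j : ℕ) - (i : ℕ)) * x j) := by
                  refine mul_le_mul_of_nonneg_left ?_ (by positivity)
                  exact mul_le_mul_of_nonneg_right hA (hx j)
              _ = C * ((α / δ) ^ ((j : ℕ) - (i : ℕ)) * (δ ^ ((j : ℕ) + 1) * x j)) := by
                  rw [show δ ^ ((i : ℕ) + 1) * (C * α ^ ((j : ℕ) - (i : ℕ)) * x j)
                      = C * (δ ^ ((i : ℕ) + 1) * α ^ ((j : ℕ) - (i : ℕ)) * x j) by ring,
                    hdd]
                  ring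
              _ ≤ C * ((α / δ) ^ ((j : ℕ) - (i : ℕ)) * N) := by
                  refine mul_le_mul_of_nonneg_left ?_ hC0
                  exact mul_le_mul_of_nonneg_left (hNx j) (by positivity)
              _ = C * N * (α / δ) ^ ((j : ℕ) - (i : ℕ)) := by ring
        _ = C * N * ∑ j ∈ univ.filter (fun j : Fin d => ¬ (j : ℕ) ≤ (i : ℕ)),
              (α / δ) ^ ((j : ℕ) - (i : ℕ)) := by rw [← Finset.mul_sum]
        _ ≤ C * N * ((α / δ) ^ 1 * (1 - α / δ)⁻¹) := by
            refine mul_le_mul_of_nonneg_left ?_ (mul_nonneg hC0 hN0)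
            refine geom_tail_sum' hr0 hr1 _ (fun j : Fin d => (j : ℕ) - (i : ℕ)) 1 ?_ ?_
            · intro j hj
              simp only [mem_filter, mem_univ, true_and, not_le] at hj
              show 1 ≤ (j : ℕ) - (i : ℕ)
              omega
            · intro a ha b hb h
              simp only [coe_filter, Set.mem_setOf_eq, mem_univ, true_and, not_le] at ha hb
              have h' : (a : ℕ) - (i : ℕ) = (b : ℕ) - (i : ℕ) := h
              exact Fin.ext (by omega)
        _ = C * (α / δ) / (1 - α / δ) * N := by
            rw [pow_one, div_eq_mul_inv]; ring
    calc _ ≤ M / (1 - δ) * N + C * (α / δ) / (1 - α / δ) * N := add_le_add h1 h2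
      _ = K * N := by rw [hKdef]; ring
  -- main estimate
  have hβsd : ∀ n : ℕ, β ^ n = (β / δ) ^ n * δ ^ n := by
    intro n
    rw [div_pow]
    field_simp
  calc ∑ i ∈ univ.filter (fun i : Fin d => d' ≤ (i : ℕ)), β ^ ((i : ℕ) + 1) * (A *ᵥ x) i
      = ∑ i ∈ univ.filter (fun i : Fin d => d' ≤ (i : ℕ)),
          (β / δ) ^ ((i : ℕ) + 1) * (δ ^ ((i : ℕ) + 1) * (A *ᵥ x) i) := by
        refine Finset.sum_congr rfl fun i _ => ?_
        rw [hβsd ((i : ℕ) + 1)]; ring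
    _ ≤ ∑ i ∈ univ.filter (fun i : Fin d => d' ≤ (i : ℕ)),
          (β / δ) ^ ((i : ℕ) + 1) * (K * N) := by
        refine Finset.sum_le_sum fun i _ => ?_
        exact mul_le_mul_of_nonneg_left (key i) (by positivity)
    _ = K * N * ∑ i ∈ univ.filter (fun i : Fin d => d' ≤ (i : ℕ)),
          (β / δ) ^ ((i : ℕ) + 1) := by
        rw [← Finset.sum_mul, mul_comm]
    _ ≤ K * N * ((β / δ) ^ (d' + 1) * (1 - β / δ)⁻¹) := by
        refine mul_le_mul_of_nonneg_left ?_ (mul_nonneg hK0 hN0)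
        refine geom_tail_sum' hs0 hs1 _ (fun i : Fin d => (i : ℕ) + 1) (d' + 1) ?_ ?_
        · intro i hi
          simp only [mem_filter, mem_univ, true_and] at hi
          show d' + 1 ≤ (i : ℕ) + 1
          omega
        · intro a ha b hb h
          have h' : (a : ℕ) + 1 = (b : ℕ) + 1 := h
          exact Fin.ext (by omega)
    _ = (M / ((1 - δ) * (1 - β / δ)) + C * (α / δ) / ((1 - α / δ) * (1 - β / δ)))
          * N * (β / δ) ^ (d' + 1) := by
        have hconst : (M / (1 - δ) + C * (α / δ) / (1 - α / δ)) * (1 - β / δ)⁻¹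
            = M / ((1 - δ) * (1 - β / δ)) + C * (α / δ) / ((1 - α / δ) * (1 - β / δ)) := by
          rw [div_mul_eq_div_div, div_mul_eq_div_div, ← add_div]; ring
        calc K * N * ((β / δ) ^ (d' + 1) * (1 - β / δ)⁻¹)
            = ((M / (1 - δ) + C * (α / δ) / (1 - α / δ)) * (1 - β / δ)⁻¹)
                * N * (β / δ) ^ (d' + 1) := by rw [hKdef]; ring
          _ = _ := by rw [hconst]
end

section
/- Let d ≥ 1, let A be a d×d real matrix with nonnegative entries, and suppose there are constants C, M ≥ 1 and α ∈ (0, 1) with A_{ij} ≤ C α^{j−i} for all 1 ≤ i ≤ j ≤ d and A_{ij} ≤ M for all 1 ≤ i, j ≤ d. Let β ∈ (α, 1) and let x ∈ ℝ^d have nonnegative entries. Then ∑_{i=1}^d β^i (A x)_i ≤ (C/(1 − α/β) + M β/(1 − β)) · ∑_{j=1}^d β^j x_j. -/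
/-!
Swapping the sums, `∑ᵢ βⁱ (A x)ᵢ = ∑ⱼ (∑ᵢ βⁱ Aᵢⱼ) xⱼ`, so it suffices to bound every
`β`-weighted column sum of `A` by `K βʲ`. In column `j` the entries with `i ≤ j` contribute at
most `C βʲ ∑ₖ (α/β)ᵏ ≤ C βʲ / (1 - α/β)`, and those with `i > j` at most
`M ∑_{i > j} βⁱ ≤ M βʲ β / (1 - β)`.
-/

open Matrix Finset

lemma dotProduct_mulVec_le_of_vecMul_le {m n : Type*} [Fintype m] [Fintype n]
    {A : Matrix m n ℝ} {w : m → ℝ} {v x : n → ℝ} {K : ℝ}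
    (hwA : w ᵥ* A ≤ K • v) (hx : 0 ≤ x) :
    w ⬝ᵥ (A *ᵥ x) ≤ K * (v ⬝ᵥ x) := by
  rw [dotProduct_mulVec, ← smul_eq_mul, ← smul_dotProduct]
  exact dotProduct_le_dotProduct_of_nonneg_right hwA hx

lemma geom_sum₂_le_pow_div_sub {x y : ℝ} (hy : 0 ≤ y) (hyx : y < x) (n : ℕ) :
    ∑ i ∈ range n, x ^ i * y ^ (n - 1 - i) ≤ x ^ n / (x - y) := by
  have hxy : 0 < x - y := sub_pos.mpr hyx
  rw [le_div_iff₀ hxy, geom_sum₂_mul]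
  linarith [pow_nonneg hy n]

section WeightedColumnSum

variable {C M α β : ℝ}

lemma sum_range_geometric_piecewise_le (hC : 0 ≤ C) (hM : 0 ≤ M) (hα : 0 ≤ α) (hαβ : α < β)
    (hβ : β < 1) {d j : ℕ} (hjd : j < d) :
    ∑ i ∈ range d, (if i ≤ j then C * β ^ (i + 1) * α ^ (j - i) else M * β ^ (i + 1)) ≤
      (C / (1 - α / β) + M * β / (1 - β)) * β ^ (j + 1) := by
  have hβ0 : 0 < β := hα.trans_lt hαβ
  rw [← sum_range_add_sum_Ico _ hjd]
  have upper : ∑ i ∈ range (j + 1), (if i ≤ j then C * β ^ (i + 1) * α ^ (j - i)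
      else M * β ^ (i + 1)) ≤ C / (1 - α / β) * β ^ (j + 1) := calc
    _ = C * β * ∑ i ∈ range (j + 1), β ^ i * α ^ (j + 1 - 1 - i) := by
      rw [mul_sum]
      refine sum_congr rfl fun i hi => ?_
      rw [if_pos (Nat.lt_succ_iff.mp (mem_range.mp hi)), Nat.add_sub_cancel, pow_succ]
      ring
    _ ≤ C * β * (β ^ (j + 1) / (β - α)) :=
      mul_le_mul_of_nonneg_left (geom_sum₂_le_pow_div_sub hα hαβ _) (by positivity)
    _ = C / (1 - α / β) * β ^ (j + 1) := by
      have : β - α ≠ 0 := (sub_pos.mpr hαβ).ne'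
      field_simp
  have lower : ∑ i ∈ Ico (j + 1) d, (if i ≤ j then C * β ^ (i + 1) * α ^ (j - i)
      else M * β ^ (i + 1)) ≤ M * β / (1 - β) * β ^ (j + 1) := calc
    _ = M * β * ∑ i ∈ Ico (j + 1) d, β ^ i := by
      rw [mul_sum]
      refine sum_congr rfl fun i hi => ?_
      rw [if_neg (by have := (mem_Ico.mp hi).1; omega), pow_succ]
      ring
    _ ≤ M * β * (β ^ (j + 1) / (1 - β)) :=
      mul_le_mul_of_nonneg_left (geom_sum_Ico_le_of_lt_one hβ0.le hβ) (by positivity)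
    _ = M * β / (1 - β) * β ^ (j + 1) := by ring
  linarith

lemma sum_pow_mul_le_of_geometric_bound (hC : 0 ≤ C) (hM : 0 ≤ M) (hα : 0 ≤ α) (hαβ : α < β)
    (hβ : β < 1) {d : ℕ} (a : Fin d → ℝ) (j : Fin d)
    (hgeo : ∀ i : Fin d, (i : ℕ) ≤ j → a i ≤ C * α ^ ((j : ℕ) - i)) (hbdd : ∀ i, a i ≤ M) :
    ∑ i : Fin d, β ^ ((i : ℕ) + 1) * a i ≤
      (C / (1 - α / β) + M * β / (1 - β)) * β ^ ((j : ℕ) + 1) := by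
  have hβ0 : 0 ≤ β := hα.trans hαβ.le
  refine le_trans ?_ (sum_range_geometric_piecewise_le hC hM hα hαβ hβ j.isLt)
  rw [← Fin.sum_univ_eq_sum_range]
  refine sum_le_sum fun i _ => ?_
  split_ifs with hij
  · calc β ^ ((i : ℕ) + 1) * a i ≤ β ^ ((i : ℕ) + 1) * (C * α ^ ((j : ℕ) - i)) := by
          gcongr; exact hgeo i hij
      _ = _ := by ring
  · calc β ^ ((i : ℕ) + 1) * a i ≤ β ^ ((i : ℕ) + 1) * M := by gcongr; exact hbdd i
      _ = _ := by ring

end WeightedColumnSum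

/-- Indices of `Fin d` are 0-based, so the paper's 1-based index `i` corresponds to
`(i : ℕ) + 1`. -/
theorem stmt10_general (d : ℕ) (A : Matrix (Fin d) (Fin d) ℝ)
    (C M α β : ℝ) (hC : 1 ≤ C) (hM : 1 ≤ M)
    (hα0 : 0 < α) (hαβ : α < β) (hβ1 : β < 1)
    (hgeo : ∀ i j : Fin d, (i : ℕ) ≤ (j : ℕ) → A i j ≤ C * α ^ ((j : ℕ) - (i : ℕ)))
    (hbdd : ∀ i j, A i j ≤ M)
    (x : Fin d → ℝ) (hx : ∀ i, 0 ≤ x i) :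
    ∑ i : Fin d, β ^ ((i : ℕ) + 1) * (A *ᵥ x) i ≤
      (C / (1 - α / β) + M * β / (1 - β)) * ∑ j : Fin d, β ^ ((j : ℕ) + 1) * x j := by
  refine dotProduct_mulVec_le_of_vecMul_le (fun j => ?_) hx
  exact sum_pow_mul_le_of_geometric_bound (by linarith) (by linarith) hα0.le hαβ hβ1
    (fun i => A i j) j (fun i => hgeo i j) (fun i => hbdd i j)

/-- Under the geometric off-diagonal bound and uniform bound on the nonnegative matrix `A`,
the weighted `ℓ¹` functional `∑ βⁱ (Ax)_i` is comparable to `∑ βʲ x_j`. Indices of `Fin d` are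
0-based, so the paper's 1-based index `i` corresponds to `(i : ℕ) + 1`. -/
theorem stmt10 (d : ℕ) (hd : 1 ≤ d) (A : Matrix (Fin d) (Fin d) ℝ)
    (C M α β : ℝ) (hC : 1 ≤ C) (hM : 1 ≤ M)
    (hα0 : 0 < α) (hα1 : α < 1) (hαβ : α < β) (hβ1 : β < 1)
    (hnn : ∀ i j, 0 ≤ A i j)
    (hgeo : ∀ i j : Fin d, (i : ℕ) ≤ (j : ℕ) → A i j ≤ C * α ^ ((j : ℕ) - (i : ℕ)))
    (hbdd : ∀ i j, A i j ≤ M)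
    (x : Fin d → ℝ) (hx : ∀ i, 0 ≤ x i) :
    ∑ i : Fin d, β ^ ((i : ℕ) + 1) * (A *ᵥ x) i ≤
      (C / (1 - α / β) + M * β / (1 - β)) * ∑ j : Fin d, β ^ ((j : ℕ) + 1) * x j :=
  stmt10_general d A C M α β hC hM hα0 hαβ hβ1 hgeo hbdd x hx
end

section
/- Let d ≥ 1, let A be a d×d real matrix with nonnegative entries, and suppose there are constants C, M ≥ 1 and α ∈ (0, 1) with A_{ij} ≤ C α^{j−i} for all 1 ≤ i ≤ j ≤ d and A_{ij} ≤ M for all 1 ≤ i, j ≤ d. Fix δ ∈ (α, 1), β ∈ (α, δ), and set C' = M/(1 − √δ) + C (α/√δ)/(1 − α/√δ). Then for every x ∈ ℝ^d with nonnegative entries, (∑_{i=1}^d β^i (A x)_i)² ≤ (max_{1 ≤ j ≤ d} δ^{j/2} x_j)² · (C')² · (β/(1−β)) · ((β/δ)/(1 − β/δ)). -/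
open Matrix Finset

/-!
Put `γ = √δ` and `N = maxⱼ γʲ⁺¹ xⱼ`. Splitting row `i` of `A` at the diagonal, an entry `j ≤ i`
contributes at most `M γ^(i-j) N` to `γⁱ⁺¹ (Ax)ᵢ` and an entry `j > i` at most
`C (α/γ)^(j-i) N`, so two geometric series give `γⁱ⁺¹ (Ax)ᵢ ≤ C' N`. Writing
`βⁱ⁺¹ = (β/γ)ⁱ⁺¹ γⁱ⁺¹` then bounds the weighted sum by `C' N q` with `q = (β/γ)/(1 - β/γ)`,
and `q² ≤ (β/(1-β)) ((β/δ)/(1-β/δ))` is the AM-GM inequality `β + β/δ ≥ 2β/γ` in disguise.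
-/

def twoSidedGeom (M C ρ σ : ℝ) (i k : ℕ) : ℝ :=
  if k ≤ i then M * ρ ^ (i - k) else C * σ ^ (k - i)

lemma sum_range_twoSidedGeom_le {M C ρ σ : ℝ} (hM : 0 ≤ M) (hC : 0 ≤ C) (hρ0 : 0 ≤ ρ)
    (hρ1 : ρ < 1) (hσ0 : 0 ≤ σ) (hσ1 : σ < 1) {i n : ℕ} (hin : i < n) :
    ∑ k ∈ range n, twoSidedGeom M C ρ σ i k ≤ M / (1 - ρ) + C * σ / (1 - σ) := by
  rw [← sum_range_add_sum_Ico _ hin]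
  gcongr ?_ + ?_
  · calc ∑ k ∈ range (i + 1), twoSidedGeom M C ρ σ i k = M * ∑ k ∈ Ico 0 (i + 1), ρ ^ k := by
          rw [← range_eq_Ico, ← sum_range_reflect, mul_sum]
          refine sum_congr rfl fun k hk => ?_
          rw [mem_range] at hk
          rw [twoSidedGeom, if_pos (by omega), show i - (i + 1 - 1 - k) = k by omega]
      _ ≤ M * (ρ ^ 0 / (1 - ρ)) := by gcongr; exact geom_sum_Ico_le_of_lt_one hρ0 hρ1
      _ = M / (1 - ρ) := by ring
  · calc ∑ k ∈ Ico (i + 1) n, twoSidedGeom M C ρ σ i k = C * ∑ k ∈ Ico 1 (n - i), σ ^ k := by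
          rw [mul_sum, sum_Ico_eq_sum_range, sum_Ico_eq_sum_range,
            show n - (i + 1) = n - i - 1 by omega]
          refine sum_congr rfl fun k _ => ?_
          rw [twoSidedGeom, if_neg (by omega), show i + 1 + k - i = 1 + k by omega]
      _ ≤ C * (σ ^ 1 / (1 - σ)) := by gcongr; exact geom_sum_Ico_le_of_lt_one hσ0 hσ1
      _ = C * σ / (1 - σ) := by ring

lemma mul_pow_mul_le_twoSidedGeom_mul {a M C α γ y N : ℝ} (hM : 0 ≤ M) (hC : 0 ≤ C)
    (hα : 0 ≤ α) (hγ : 0 < γ) {i j : ℕ} (haM : a ≤ M) (haC : i ≤ j → a ≤ C * α ^ (j - i))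
    (hy : 0 ≤ y) (hN : γ ^ (j + 1) * y ≤ N) :
    a * (γ ^ (i + 1) * y) ≤ twoSidedGeom M C γ (α / γ) i j * N := by
  rw [twoSidedGeom]
  split_ifs with hji
  · obtain ⟨k, rfl⟩ := Nat.exists_eq_add_of_le hji
    calc a * (γ ^ (j + k + 1) * y) ≤ M * (γ ^ (j + k + 1) * y) := by gcongr
      _ = M * γ ^ (j + k - j) * (γ ^ (j + 1) * y) := by rw [Nat.add_sub_cancel_left]; ring
      _ ≤ M * γ ^ (j + k - j) * N := by gcongr
  · obtain ⟨k, rfl⟩ := Nat.exists_eq_add_of_lt (not_le.mp hji)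
    calc a * (γ ^ (i + 1) * y) ≤ C * α ^ (i + k + 1 - i) * (γ ^ (i + 1) * y) := by
          gcongr; exact haC (by omega)
      _ = C * (α / γ) ^ (i + k + 1 - i) * (γ ^ (i + k + 1 + 1) * y) := by
          rw [show i + k + 1 - i = k + 1 by omega, div_pow]
          field_simp
          ring
      _ ≤ C * (α / γ) ^ (i + k + 1 - i) * N := by gcongr

lemma pow_mul_mulVec_le {d : ℕ} {A : Matrix (Fin d) (Fin d) ℝ} {C M α γ N : ℝ}
    (hC : 0 ≤ C) (hM : 0 ≤ M) (hα : 0 ≤ α) (hγ0 : 0 < γ) (hγ1 : γ < 1) (hαγ : α < γ)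
    (hgeo : ∀ i j : Fin d, (i : ℕ) ≤ j → A i j ≤ C * α ^ ((j : ℕ) - i))
    (hbdd : ∀ i j, A i j ≤ M) {x : Fin d → ℝ} (hx : ∀ j, 0 ≤ x j)
    (hN : ∀ j : Fin d, γ ^ ((j : ℕ) + 1) * x j ≤ N) (i : Fin d) :
    γ ^ ((i : ℕ) + 1) * (A *ᵥ x) i ≤ (M / (1 - γ) + C * (α / γ) / (1 - α / γ)) * N := by
  have hN0 : 0 ≤ N := (mul_nonneg (by positivity) (hx i)).trans (hN i)
  calc γ ^ ((i : ℕ) + 1) * (A *ᵥ x) i = ∑ j, A i j * (γ ^ ((i : ℕ) + 1) * x j) := by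
        simp only [mulVec, dotProduct, mul_sum]; ring_nf
    _ ≤ ∑ j : Fin d, twoSidedGeom M C γ (α / γ) i j * N := sum_le_sum fun j _ =>
        mul_pow_mul_le_twoSidedGeom_mul hM hC hα hγ0 (hbdd i j) (hgeo i j) (hx j) (hN j)
    _ = (∑ k ∈ range d, twoSidedGeom M C γ (α / γ) i k) * N := by
        rw [Fin.sum_univ_eq_sum_range (fun k => twoSidedGeom M C γ (α / γ) i k * N), sum_mul]
    _ ≤ _ := by
        gcongr
        exact sum_range_twoSidedGeom_le hM hC hγ0.le hγ1 (by positivity)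
          ((div_lt_one hγ0).mpr hαγ) i.isLt

lemma sum_pow_mul_le_of_pow_mul_le {d : ℕ} {v : Fin d → ℝ} {β γ B : ℝ} (hβ : 0 ≤ β)
    (hγ : 0 < γ) (hβγ : β < γ) (hB : 0 ≤ B) (hv : ∀ i : Fin d, γ ^ ((i : ℕ) + 1) * v i ≤ B) :
    ∑ i : Fin d, β ^ ((i : ℕ) + 1) * v i ≤ B * ((β / γ) / (1 - β / γ)) := by
  calc ∑ i : Fin d, β ^ ((i : ℕ) + 1) * v i
      = ∑ i : Fin d, (β / γ) ^ ((i : ℕ) + 1) * (γ ^ ((i : ℕ) + 1) * v i) := by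
        refine sum_congr rfl fun i _ => ?_
        rw [div_pow]; field_simp
    _ ≤ ∑ i : Fin d, (β / γ) ^ ((i : ℕ) + 1) * B := by gcongr; exact hv _
    _ = B * ∑ k ∈ Ico 1 (d + 1), (β / γ) ^ k := by
        rw [Fin.sum_univ_eq_sum_range (fun k => (β / γ) ^ (k + 1) * B), ← sum_mul, mul_comm,
          sum_Ico_eq_sum_range, Nat.add_sub_cancel]
        simp only [add_comm]
    _ ≤ B * ((β / γ) ^ 1 / (1 - β / γ)) := by
        gcongr; exact geom_sum_Ico_le_of_lt_one (by positivity) ((div_lt_one hγ).mpr hβγ)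
    _ = B * ((β / γ) / (1 - β / γ)) := by rw [pow_one]

lemma sq_div_one_sub_div_le {β γ : ℝ} (hβ0 : 0 ≤ β) (hβ1 : β < 1) (hγ : 0 < γ)
    (hβγ : β < γ ^ 2) :
    ((β / γ) / (1 - β / γ)) ^ 2 ≤ β / (1 - β) * ((β / γ ^ 2) / (1 - β / γ ^ 2)) := by
  have hβγ' : β < γ := by
    rcases le_or_gt γ 1 with h | h <;> nlinarith
  -- `(γ - β)² - (1 - β)(γ² - β) = β (1 - γ)²`
  have hden : (1 - β) * (γ ^ 2 - β) ≤ (γ - β) ^ 2 := by nlinarith [sq_nonneg (1 - γ)]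
  rw [show ((β / γ) / (1 - β / γ)) ^ 2 = β ^ 2 / (γ - β) ^ 2 by
      field_simp [(sub_pos.mpr hβγ').ne'],
    show β / (1 - β) * ((β / γ ^ 2) / (1 - β / γ ^ 2)) = β ^ 2 / ((1 - β) * (γ ^ 2 - β)) by
      field_simp [(sub_pos.mpr hβγ).ne', (sub_pos.mpr hβ1).ne']]
  exact div_le_div_of_nonneg_left (sq_nonneg _) (mul_pos (by linarith) (by linarith)) hden

theorem stmt13_general (d : ℕ) (hd : 1 ≤ d) (A : Matrix (Fin d) (Fin d) ℝ)
    (C M α δ β : ℝ) (hC : 1 ≤ C) (hM : 1 ≤ M)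
    (hα0 : 0 < α) (hδ1 : δ < 1) (hαβ : α < β) (hβδ : β < δ)
    (hnn : ∀ i j, 0 ≤ A i j)
    (hgeo : ∀ i j : Fin d, (i : ℕ) ≤ (j : ℕ) → A i j ≤ C * α ^ ((j : ℕ) - (i : ℕ)))
    (hbdd : ∀ i j, A i j ≤ M)
    (C' : ℝ)
    (hC' : C' = M / (1 - Real.sqrt δ) + C * (α / Real.sqrt δ) / (1 - α / Real.sqrt δ))
    (x : Fin d → ℝ) (hx : ∀ i, 0 ≤ x i) :
    (∑ i : Fin d, β ^ ((i : ℕ) + 1) * (A *ᵥ x) i) ^ 2 ≤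
      (univ.sup' ⟨⟨0, hd⟩, mem_univ _⟩
          (fun j : Fin d => Real.sqrt δ ^ ((j : ℕ) + 1) * x j)) ^ 2 *
        C' ^ 2 * (β / (1 - β)) * ((β / δ) / (1 - β / δ)) := by
  have hβ0 : 0 < β := hα0.trans hαβ
  have hδ0 : 0 < δ := hβ0.trans hβδ
  set γ := Real.sqrt δ
  have hγδ : γ ^ 2 = δ := Real.sq_sqrt hδ0.le
  have hγ0 : 0 < γ := Real.sqrt_pos.mpr hδ0
  have hγ1 : γ < 1 := by nlinarith
  have hβγ : β < γ := by nlinarith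
  set N := univ.sup' ⟨⟨0, hd⟩, mem_univ _⟩ fun j : Fin d => γ ^ ((j : ℕ) + 1) * x j
  have hN : ∀ j : Fin d, γ ^ ((j : ℕ) + 1) * x j ≤ N := fun j =>
    le_sup' (fun j : Fin d => γ ^ ((j : ℕ) + 1) * x j) (mem_univ j)
  have hN0 : 0 ≤ N := (mul_nonneg (by positivity) (hx _)).trans (hN ⟨0, hd⟩)
  have hC'0 : 0 ≤ C' := by
    have h1 : 0 < 1 - γ := sub_pos.mpr hγ1
    have h2 : 0 < 1 - α / γ := sub_pos.mpr ((div_lt_one hγ0).mpr (hαβ.trans hβγ))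
    rw [hC']; positivity
  have hrow : ∀ i : Fin d, γ ^ ((i : ℕ) + 1) * (A *ᵥ x) i ≤ C' * N := hC' ▸
    pow_mul_mulVec_le (by linarith) (by linarith) hα0.le hγ0 hγ1 (hαβ.trans hβγ) hgeo hbdd hx hN
  have hS0 : 0 ≤ ∑ i : Fin d, β ^ ((i : ℕ) + 1) * (A *ᵥ x) i :=
    sum_nonneg fun i _ => mul_nonneg (by positivity)
      (sum_nonneg fun j _ => mul_nonneg (hnn i j) (hx j) : 0 ≤ ∑ j, A i j * x j)
  have hS := sum_pow_mul_le_of_pow_mul_le hβ0.le hγ0 hβγ (mul_nonneg hC'0 hN0) hrow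
  calc _ ≤ (C' * N * ((β / γ) / (1 - β / γ))) ^ 2 := pow_le_pow_left₀ hS0 hS 2
    _ = N ^ 2 * C' ^ 2 * ((β / γ) / (1 - β / γ)) ^ 2 := by ring
    _ ≤ N ^ 2 * C' ^ 2 * (β / (1 - β) * ((β / δ) / (1 - β / δ))) := by
        gcongr
        rw [← hγδ]
        exact sq_div_one_sub_div_le hβ0.le (hβδ.trans hδ1) hγ0 (hγδ ▸ hβδ)
    _ = _ := by ring

/-- Under the geometric off-diagonal bound and uniform bound on the nonnegative matrix `A`,
the square of the weighted `ℓ¹` functional `∑ βⁱ (Ax)_i` is controlled by the square of the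
weighted sup-norm `max_j δ^{j/2} x_j = max_j (√δ)ʲ x_j`. Indices of `Fin d` are 0-based, so
the paper's 1-based index `i` corresponds to `(i : ℕ) + 1`. -/
theorem stmt13 (d : ℕ) (hd : 1 ≤ d) (A : Matrix (Fin d) (Fin d) ℝ)
    (C M α δ β : ℝ) (hC : 1 ≤ C) (hM : 1 ≤ M)
    (hα0 : 0 < α) (hαδ : α < δ) (hδ1 : δ < 1) (hαβ : α < β) (hβδ : β < δ)
    (hnn : ∀ i j, 0 ≤ A i j)
    (hgeo : ∀ i j : Fin d, (i : ℕ) ≤ (j : ℕ) → A i j ≤ C * α ^ ((j : ℕ) - (i : ℕ)))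
    (hbdd : ∀ i j, A i j ≤ M)
    (C' : ℝ)
    (hC' : C' = M / (1 - Real.sqrt δ) + C * (α / Real.sqrt δ) / (1 - α / Real.sqrt δ))
    (x : Fin d → ℝ) (hx : ∀ i, 0 ≤ x i) :
    (∑ i : Fin d, β ^ ((i : ℕ) + 1) * (A *ᵥ x) i) ^ 2 ≤
      (univ.sup' ⟨⟨0, hd⟩, mem_univ _⟩
          (fun j : Fin d => Real.sqrt δ ^ ((j : ℕ) + 1) * x j)) ^ 2 *
        C' ^ 2 * (β / (1 - β)) * ((β / δ) / (1 - β / δ)) :=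
  stmt13_general d hd A C M α δ β hC hM hα0 hδ1 hαβ hβδ hnn hgeo hbdd C' hC' x hx
end

section
/- Let d ≥ 1 and let R = I − Pᵀ where P is the d×d matrix with P_{i,i+1} = P_{i,i−1} = 1/2 (for indices in range) and all other entries 0. Fix i₀ ∈ {1, …, d} and a sequence (i_k)_{k≥1} of elements of {1, …, d}. Define vectors S_k ∈ ℝ^d by S₀ = e_{i₀} (the i₀-th standard basis vector) and S_{k+1} = S_k − (S_k)_{i_{k+1}} R^{(i_{k+1})}, where R^{(i)} denotes the i-th column of R. Then for every k ≥ 0: all entries of S_k lie in [0, 1], ∑_{j=1}^d (S_k)_j ≤ 1, and (S_{k+1})_{i_{k+1}} = 0. -/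
open Matrix

/-!
`P` is substochastic with zero diagonal, so the `i`-th column of `R = 1 - Pᵀ` is `e_i` minus a
sub-probability vector supported off `i`. Subtracting `v i` times it kills coordinate `i`,
moves that mass onto the other coordinates with weights `P i j ≥ 0`, and loses the rest, so
nonnegativity and total mass `≤ 1` are preserved along the recursion.
-/

section ReflectionStep

variable {n : Type*}

def reflectionStep (R : Matrix n n ℝ) (i : n) (v : n → ℝ) : n → ℝ :=
  fun j => v j - v i * R j i

variable [DecidableEq n] (P : Matrix n n ℝ)

lemma one_sub_transpose_apply (i j : n) :
    (1 - Pᵀ) j i = (if j = i then 1 else 0) - P i j := by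
  simp [Matrix.sub_apply, one_apply]

lemma reflectionStep_apply_self (hdiag : ∀ i, P i i = 0) (v : n → ℝ) (i : n) :
    reflectionStep (1 - Pᵀ) i v i = 0 := by
  simp [reflectionStep, hdiag]

lemma reflectionStep_nonneg (hnonneg : ∀ i j, 0 ≤ P i j) (hdiag : ∀ i, P i i = 0)
    {v : n → ℝ} (hv : ∀ j, 0 ≤ v j) (i j : n) :
    0 ≤ reflectionStep (1 - Pᵀ) i v j := by
  by_cases hji : j = i
  · rw [hji, reflectionStep_apply_self P hdiag]
  · rw [reflectionStep, one_sub_transpose_apply, if_neg hji, zero_sub, mul_neg, sub_neg_eq_add]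
    exact add_nonneg (hv j) (mul_nonneg (hv i) (hnonneg i j))

lemma sum_reflectionStep [Fintype n] (v : n → ℝ) (i : n) :
    ∑ j, reflectionStep (1 - Pᵀ) i v j = ∑ j, v j - v i * (1 - ∑ j, P i j) := by
  simp only [reflectionStep, one_sub_transpose_apply, Finset.sum_sub_distrib, ← Finset.mul_sum,
    Finset.sum_ite_eq', Finset.mem_univ, if_true]

lemma sum_reflectionStep_le [Fintype n] {v : n → ℝ} {i : n} (hvi : 0 ≤ v i)
    (hrow : ∑ j, P i j ≤ 1) :
    ∑ j, reflectionStep (1 - Pᵀ) i v j ≤ ∑ j, v j := by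
  rw [sum_reflectionStep]
  nlinarith

end ReflectionStep

lemma sum_ite_le_of_subsingleton {ι : Type*} [Fintype ι] (p : ι → Prop) [DecidablePred p]
    (hp : ∀ a b, p a → p b → a = b) {c : ℝ} (hc : 0 ≤ c) :
    ∑ j, (if p j then c else 0) ≤ c := by
  rw [Finset.sum_ite, Finset.sum_const_zero, add_zero, Finset.sum_const, nsmul_eq_mul]
  have hcard : ((Finset.univ.filter p).card : ℝ) ≤ 1 := by
    exact_mod_cast Finset.card_le_one.mpr fun a ha b hb =>
      hp a b (Finset.mem_filter.mp ha).2 (Finset.mem_filter.mp hb).2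
  nlinarith

noncomputable def atlasMatrix (d : ℕ) : Matrix (Fin d) (Fin d) ℝ := fun i j =>
  if (j : ℕ) = (i : ℕ) + 1 then 1/2 else if (i : ℕ) = (j : ℕ) + 1 then 1/2 else 0

namespace atlasMatrix

variable {d : ℕ}

lemma nonneg (i j : Fin d) : 0 ≤ atlasMatrix d i j := by
  unfold atlasMatrix
  split_ifs <;> norm_num

lemma diag_eq_zero (i : Fin d) : atlasMatrix d i i = 0 := by
  simp [atlasMatrix]

lemma row_sum_le_one (i : Fin d) : ∑ j, atlasMatrix d i j ≤ 1 := by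
  have hsplit : ∀ j : Fin d, atlasMatrix d i j =
      (if (j : ℕ) = (i : ℕ) + 1 then 1/2 else 0) + (if (i : ℕ) = (j : ℕ) + 1 then 1/2 else 0) := by
    intro j
    unfold atlasMatrix
    split_ifs <;> first | omega | norm_num
  calc ∑ j, atlasMatrix d i j
      = ∑ j : Fin d, (if (j : ℕ) = (i : ℕ) + 1 then (1:ℝ)/2 else 0) +
        ∑ j : Fin d, (if (i : ℕ) = (j : ℕ) + 1 then (1:ℝ)/2 else 0) := by
        rw [← Finset.sum_add_distrib]
        exact Finset.sum_congr rfl fun j _ => hsplit j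
    _ ≤ 1/2 + 1/2 := by
        gcongr <;> refine sum_ite_le_of_subsingleton _ (fun a b ha hb => Fin.ext ?_) (by norm_num)
          <;> omega
    _ = 1 := by norm_num

end atlasMatrix

lemma reflectionStep_recursion_nonneg_and_sum_le_one {n : Type*} [Fintype n] [DecidableEq n]
    (P : Matrix n n ℝ) (hnonneg : ∀ i j, 0 ≤ P i j) (hdiag : ∀ i, P i i = 0)
    (hrow : ∀ i, ∑ j, P i j ≤ 1) (i0 : n) (idx : ℕ → n) (S : ℕ → n → ℝ)
    (hS0 : ∀ j, S 0 j = if j = i0 then 1 else 0)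
    (hSrec : ∀ k, S (k + 1) = reflectionStep (1 - Pᵀ) (idx (k + 1)) (S k)) (k : ℕ) :
    (∀ j, 0 ≤ S k j) ∧ ∑ j, S k j ≤ 1 := by
  induction k with
  | zero =>
    refine ⟨fun j => ?_, ?_⟩
    · rw [hS0]; split_ifs <;> norm_num
    · simp [hS0]
  | succ k ih =>
    obtain ⟨hnn, hsum⟩ := ih
    rw [hSrec]
    exact ⟨reflectionStep_nonneg P hnonneg hdiag hnn _,
      (sum_reflectionStep_le P (hnn _) (hrow _)).trans hsum⟩

theorem stmt14_general (d : ℕ)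
    (P : Matrix (Fin d) (Fin d) ℝ)
    (hP : ∀ i j : Fin d, P i j =
      if (j : ℕ) = (i : ℕ) + 1 then 1/2 else if (i : ℕ) = (j : ℕ) + 1 then 1/2 else 0)
    (R : Matrix (Fin d) (Fin d) ℝ) (hR : R = 1 - Pᵀ)
    (i0 : Fin d) (idx : ℕ → Fin d)
    (S : ℕ → Fin d → ℝ)
    (hS0 : ∀ j, S 0 j = if j = i0 then 1 else 0)
    (hSrec : ∀ k j, S (k + 1) j = S k j - S k (idx (k + 1)) * R j (idx (k + 1))) :
    ∀ k, (∀ j, 0 ≤ S k j ∧ S k j ≤ 1) ∧ (∑ j, S k j ≤ 1) ∧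
      S (k + 1) (idx (k + 1)) = 0 := by
  obtain rfl : P = atlasMatrix d := Matrix.ext hP
  subst hR
  have hstep : ∀ k, S (k + 1) = reflectionStep (1 - (atlasMatrix d)ᵀ) (idx (k + 1)) (S k) :=
    fun k => funext (hSrec k)
  intro k
  obtain ⟨hnn, hsum⟩ := reflectionStep_recursion_nonneg_and_sum_le_one _ atlasMatrix.nonneg
    atlasMatrix.diag_eq_zero atlasMatrix.row_sum_le_one i0 idx S hS0 hstep k
  refine ⟨fun j => ⟨hnn j, ?_⟩, hsum, ?_⟩
  · exact (Finset.single_le_sum (fun j _ => hnn j) (Finset.mem_univ j)).trans hsum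
  · rw [hstep]
    exact reflectionStep_apply_self _ atlasMatrix.diag_eq_zero _ _

/-- The pathwise-derivative recursion for the symmetric Atlas model: starting from a standard
basis vector and repeatedly subtracting `(S_k)_{i_{k+1}}` times the `i_{k+1}`-th column of
`R = I - Pᵀ`, all entries stay in `[0,1]`, the total mass stays at most `1`, and the
coordinate just updated vanishes. -/
theorem stmt14 (d : ℕ) (hd : 1 ≤ d)
    (P : Matrix (Fin d) (Fin d) ℝ)
    (hP : ∀ i j : Fin d, P i j =
      if (j : ℕ) = (i : ℕ) + 1 then 1/2 else if (i : ℕ) = (j : ℕ) + 1 then 1/2 else 0)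
    (R : Matrix (Fin d) (Fin d) ℝ) (hR : R = 1 - Pᵀ)
    (i0 : Fin d) (idx : ℕ → Fin d)
    (S : ℕ → Fin d → ℝ)
    (hS0 : ∀ j, S 0 j = if j = i0 then 1 else 0)
    (hSrec : ∀ k j, S (k + 1) j = S k j - S k (idx (k + 1)) * R j (idx (k + 1))) :
    ∀ k, (∀ j, 0 ≤ S k j ∧ S k j ≤ 1) ∧ (∑ j, S k j ≤ 1) ∧
      S (k + 1) (idx (k + 1)) = 0 :=
  stmt14_general d P hP R hR i0 idx S hS0 hSrec
end
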